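/- arXiv:2601.05748 — 8 statements merged into one kernel-verified Lean document; each statement's English description precedes it below -/
import Mathlib

section
/- For every word w = σ₁σ₂…σₖ (a sequence of (d-1)-cells on vertex set [n] such that consecutive unions σᵢ ∪ σᵢ₊₁ are d-cells), the number of vertices in the support of w is at most the number of d-cells in the support of w plus d, i.e., |supp₀(w)| ≤ |supp_d(w)| + d. -/
/-- For every word `w = σ₁…σₖ` (sequence of `(d-1)`-cells, i.e. `d`-element
subsets of `[n]`, whose consecutive unions are `d`-cells, i.e. have cardinality `d+1`),
we have `|supp₀(w)| ≤ |supp_d(w)| + d`. -/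
theorem stmt0 (n d k : ℕ) (hd : 2 ≤ d) (hk : 1 ≤ k) (σ : ℕ → Finset (Fin n))
    (hcard : ∀ i < k, (σ i).card = d)
    (hcell : ∀ i, i + 1 < k → (σ i ∪ σ (i + 1)).card = d + 1) :
    ((Finset.range k).biUnion σ).card ≤
      ((Finset.range (k - 1)).image (fun i => σ i ∪ σ (i + 1))).card + d := by
  induction k with
  | zero => omega
  | succ k ih =>
    rcases Nat.eq_zero_or_pos k with hk0 | hkpos
    · subst hk0
      have : (0:ℕ)+1 = 1 := rfl
      rw [this]
      rw [Finset.range_one, Finset.singleton_biUnion]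
      rw [hcard 0 (by omega)]
      omega
    · obtain ⟨j, rfl⟩ : ∃ j, k = j + 1 := ⟨k - 1, (Nat.succ_pred_eq_of_pos hkpos).symm⟩
      have IH := ih hkpos (fun i hi => hcard i (by omega)) (fun i hi => hcell i (by omega))
      rw [show j + 1 - 1 = j from rfl] at IH
      set U := (Finset.range (j + 1)).biUnion σ with hU
      set I := (Finset.range j).image (fun i => σ i ∪ σ (i + 1)) with hI
      have hsimp : j + 1 + 1 - 1 = j + 1 := rfl
      have hUsub : ∀ i, i < j + 1 → σ i ⊆ U := fun i hi =>
        Finset.subset_biUnion_of_mem σ (Finset.mem_range.mpr hi)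
      have hU' : (Finset.range (j + 1 + 1)).biUnion σ = σ (j + 1) ∪ U := by
        rw [Finset.range_add_one, Finset.biUnion_insert]
      have hI' : (Finset.range (j + 1 + 1 - 1)).image (fun i => σ i ∪ σ (i + 1))
          = insert (σ j ∪ σ (j + 1)) I := by
        rw [hsimp, Finset.range_add_one, Finset.image_insert]
      rw [hU', hI']
      by_cases hsub : σ (j + 1) ⊆ U
      · have h1 : σ (j + 1) ∪ U = U := Finset.union_eq_right.mpr hsub
        rw [h1]
        have := Finset.card_le_card (Finset.subset_insert (σ j ∪ σ (j + 1)) I)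
        omega
      · -- new vertex exists, so the new cell is not in I
        have hnew : (σ j ∪ σ (j + 1)) ∉ I := by
          intro hmem
          rw [hI, Finset.mem_image] at hmem
          obtain ⟨i, hi, heq⟩ := hmem
          rw [Finset.mem_range] at hi
          apply hsub
          have : σ (j + 1) ⊆ σ i ∪ σ (i + 1) := heq ▸ Finset.subset_union_right
          exact this.trans (Finset.union_subset (hUsub i (by omega)) (hUsub (i + 1) (by omega)))
        have hIcard : (insert (σ j ∪ σ (j + 1)) I).card = I.card + 1 :=
          Finset.card_insert_of_notMem hnew
        -- card of new union ≤ card U + 1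
        have hsdiff : (σ (j + 1) \ σ j).card = 1 := by
          have h1 : σ (j + 1) \ σ j = (σ j ∪ σ (j + 1)) \ σ j := by
            rw [Finset.union_sdiff_left]
          rw [h1, Finset.card_sdiff_of_subset Finset.subset_union_left,
            hcell j (by omega), hcard j (by omega)]
          omega
        have hUsubset : σ (j + 1) ∪ U ⊆ U ∪ (σ (j + 1) \ σ j) := by
          intro x hx
          rcases Finset.mem_union.mp hx with hx | hx
          · by_cases hxj : x ∈ σ j
            · exact Finset.mem_union_left _ (hUsub j (by omega) hxj)
            · exact Finset.mem_union_right _ (Finset.mem_sdiff.mpr ⟨hx, hxj⟩)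
          · exact Finset.mem_union_left _ hx
        calc (σ (j + 1) ∪ U).card ≤ (U ∪ (σ (j + 1) \ σ j)).card :=
              Finset.card_le_card hUsubset
          _ ≤ U.card + (σ (j + 1) \ σ j).card := Finset.card_union_le _ _
          _ = U.card + 1 := by rw [hsdiff]
          _ ≤ I.card + d + 1 := by omega
          _ = (insert (σ j ∪ σ (j + 1)) I).card + d := by rw [hIcard]; ring
end

section
/- Let k be even and let w = σ₁σ₂…σₖ₊₁ be a closed word of length k+1 with |supp₀(w)| = k/2 + d such that every d-cell is traversed either 0 times or at least 2 times by w. Then for every 1 ≤ u ≤ d, the number of u-dimensional cells contained in some consecutive union σᵢ ∪ σᵢ₊₁ equals C(d, u+1) + (k/2)·C(d, u). -/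
open Finset

/-- vertices covered by the first `j` steps -/
private def wV (n : ℕ) (σ : ℕ → Finset (Fin n)) (j : ℕ) : Finset (Fin n) :=
  (Finset.range j).biUnion (fun i => σ i ∪ σ (i + 1))

/-- distinct d-cells among the first `j` steps -/
private def wC (n : ℕ) (σ : ℕ → Finset (Fin n)) (j : ℕ) : Finset (Finset (Fin n)) :=
  (Finset.range j).image (fun i => σ i ∪ σ (i + 1))

/-- u-cells covered by the first `j` steps -/
private def wU (n : ℕ) (σ : ℕ → Finset (Fin n)) (u j : ℕ) : Finset (Finset (Fin n)) :=
  (Finset.range j).biUnion (fun i => (σ i ∪ σ (i + 1)).powersetCard (u + 1))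

private lemma wV_succ (n : ℕ) (σ : ℕ → Finset (Fin n)) (j : ℕ) :
    wV n σ (j + 1) = (σ j ∪ σ (j + 1)) ∪ wV n σ j := by
  rw [wV, wV, Finset.range_add_one, Finset.biUnion_insert]

private lemma wC_succ (n : ℕ) (σ : ℕ → Finset (Fin n)) (j : ℕ) :
    wC n σ (j + 1) = insert (σ j ∪ σ (j + 1)) (wC n σ j) := by
  rw [wC, wC, Finset.range_add_one, Finset.image_insert]

private lemma wU_succ (n : ℕ) (σ : ℕ → Finset (Fin n)) (u j : ℕ) :
    wU n σ u (j + 1) = (σ j ∪ σ (j + 1)).powersetCard (u + 1) ∪ wU n σ u j := by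
  rw [wU, wU, Finset.range_add_one, Finset.biUnion_insert]

/-- For an even `k` and a closed word `w = σ₁…σₖ₊₁` of `(d-1)`-cells on `[n]`
with `|supp₀(w)| = k/2 + d` such that no `d`-cell is traversed exactly once, for every
`1 ≤ u ≤ d` the number of `u`-cells contained in some consecutive union equals
`C(d, u+1) + (k/2)·C(d, u)`. -/
theorem stmt1 (n d k : ℕ) (hd : 2 ≤ d) (hk : 2 ≤ k) (hke : Even k)
    (σ : ℕ → Finset (Fin n))
    (hcard : ∀ i ≤ k, (σ i).card = d)
    (hcell : ∀ i < k, (σ i ∪ σ (i + 1)).card = d + 1)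
    (hclosed : σ k = σ 0)
    (hsupp : ((Finset.range (k + 1)).biUnion σ).card = k / 2 + d)
    (hN : ∀ τ : Finset (Fin n),
      ((Finset.range k).filter (fun i => σ i ∪ σ (i + 1) = τ)).card ≠ 1)
    (u : ℕ) (hu1 : 1 ≤ u) (hud : u ≤ d) :
    ((Finset.range k).biUnion
        (fun i => (σ i ∪ σ (i + 1)).powersetCard (u + 1))).card =
      Nat.choose d (u + 1) + (k / 2) * Nat.choose d u := by
  -- basic containments
  have hτV : ∀ i j, i < j → (σ i ∪ σ (i + 1)) ⊆ wV n σ j := by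
    intro i j hij
    exact Finset.subset_biUnion_of_mem (fun i => σ i ∪ σ (i + 1)) (Finset.mem_range.2 hij)
  have hσV : ∀ j, 1 ≤ j → σ j ⊆ wV n σ j := by
    intro j hj
    obtain ⟨m, rfl⟩ := Nat.exists_eq_add_of_le hj
    have : σ (1 + m) ⊆ (σ m ∪ σ (m + 1)) := by
      rw [Nat.add_comm 1 m]
      exact Finset.subset_union_right
    exact this.trans (hτV m (1 + m) (by omega))
  -- the total vertex set
  have hVk : wV n σ k = (Finset.range (k + 1)).biUnion σ := by
    apply Finset.Subset.antisymm
    · intro x hx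
      rw [wV, Finset.mem_biUnion] at hx
      obtain ⟨i, hi, hxi⟩ := hx
      rw [Finset.mem_range] at hi
      rw [Finset.mem_biUnion]
      rcases Finset.mem_union.1 hxi with h | h
      · exact ⟨i, Finset.mem_range.2 (by omega), h⟩
      · exact ⟨i + 1, Finset.mem_range.2 (by omega), h⟩
    · intro x hx
      rw [Finset.mem_biUnion] at hx
      obtain ⟨i, hi, hxi⟩ := hx
      rw [Finset.mem_range] at hi
      rw [wV, Finset.mem_biUnion]
      rcases Nat.lt_or_ge i k with h | h
      · exact ⟨i, Finset.mem_range.2 h, Finset.mem_union_left _ hxi⟩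
      · have : i = k := by omega
        subst this
        rw [hclosed] at hxi
        exact ⟨0, Finset.mem_range.2 (by omega), Finset.mem_union_left _ hxi⟩
  have hAk : (wV n σ k).card = k / 2 + d := by rw [hVk]; exact hsupp
  -- each traversed cell is traversed at least twice
  have hBk2 : 2 * (wC n σ k).card ≤ k := by
    have hsum := Finset.card_eq_sum_card_image (fun i => σ i ∪ σ (i + 1)) (Finset.range k)
    rw [Finset.card_range] at hsum
    have hge : ∀ t ∈ wC n σ k,
        2 ≤ ((Finset.range k).filter (fun i => σ i ∪ σ (i + 1) = t)).card := by
      intro t ht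
      rw [wC, Finset.mem_image] at ht
      obtain ⟨i, hi, hit⟩ := ht
      have h0 : ((Finset.range k).filter (fun i => σ i ∪ σ (i + 1) = t)).card ≠ 0 := by
        rw [Finset.card_ne_zero]
        exact ⟨i, Finset.mem_filter.2 ⟨hi, hit⟩⟩
      have h1 := hN t
      omega
    calc 2 * (wC n σ k).card = ∑ _t ∈ wC n σ k, 2 := by
          rw [Finset.sum_const, smul_eq_mul, mul_comm]
      _ ≤ ∑ t ∈ wC n σ k, ((Finset.range k).filter (fun i => σ i ∪ σ (i + 1) = t)).card :=
          Finset.sum_le_sum hge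
      _ = k := hsum.symm
  -- repeat step: everything unchanged
  have hrep : ∀ j, (σ j ∪ σ (j + 1)) ∈ wC n σ j →
      wV n σ (j + 1) = wV n σ j ∧ wC n σ (j + 1) = wC n σ j ∧
      wU n σ u (j + 1) = wU n σ u j := by
    intro j hj
    have hjmem : (σ j ∪ σ (j + 1)) ∈ wC n σ j := hj
    rw [wC, Finset.mem_image] at hjmem
    obtain ⟨i, hi, hit⟩ := hjmem
    rw [Finset.mem_range] at hi
    refine ⟨?_, ?_, ?_⟩
    · rw [wV_succ, Finset.union_eq_right]
      exact hit ▸ hτV i j hi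
    · rw [wC_succ, Finset.insert_eq_self]
      exact hj
    · rw [wU_succ, Finset.union_eq_right]
      intro s hs
      rw [wU, Finset.mem_biUnion]
      exact ⟨i, Finset.mem_range.2 hi, hit ▸ hs⟩
  -- new step: vertex count grows by at most 1, cell count grows by 1
  have hnew : ∀ j, 1 ≤ j → j < k → (σ j ∪ σ (j + 1)) ∉ wC n σ j →
      (wV n σ (j + 1)).card ≤ (wV n σ j).card + 1 ∧
      (wC n σ (j + 1)).card = (wC n σ j).card + 1 := by
    intro j hj1 hjk hjnew
    constructor
    · have hsub : (σ j ∪ σ (j + 1)) \ wV n σ j ⊆ (σ j ∪ σ (j + 1)) \ σ j :=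
        Finset.sdiff_subset_sdiff (Finset.Subset.refl _) (hσV j hj1)
      have hcards : ((σ j ∪ σ (j + 1)) \ σ j).card = 1 := by
        rw [Finset.card_sdiff_of_subset Finset.subset_union_left, hcell j hjk, hcard j (by omega)]
        omega
      have hle : ((σ j ∪ σ (j + 1)) \ wV n σ j).card ≤ 1 :=
        le_trans (Finset.card_le_card hsub) (le_of_eq hcards)
      have := Finset.card_sdiff_add_card ((σ j ∪ σ (j + 1))) (wV n σ j)
      rw [wV_succ]
      omega
    · rw [wC_succ, Finset.card_insert_of_notMem hjnew]
  -- forward inequality: |V j| ≤ d + |C j|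
  have hQ : ∀ j, 1 ≤ j → j ≤ k → (wV n σ j).card ≤ d + (wC n σ j).card := by
    intro j
    induction j with
    | zero => intro h; omega
    | succ m ih =>
      intro _ hmk
      rcases Nat.eq_or_lt_of_le (Nat.one_le_iff_ne_zero.2 (by omega) :
          (1 : ℕ) ≤ m + 1) with h1 | h1
      · -- m = 0 : base case
        have hm : m = 0 := by omega
        subst hm
        have hV1 : wV n σ 1 = (σ 0 ∪ σ 1) := by
          rw [wV_succ]
          simp [wV]
        have hC1 : wC n σ 1 = {(σ 0 ∪ σ 1)} := by
          rw [wC_succ]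
          simp [wC]
        rw [hV1, hC1, hcell 0 (by omega), Finset.card_singleton]
      · have hm1 : 1 ≤ m := by omega
        have hmk' : m < k := by omega
        have hQm := ih hm1 (by omega)
        by_cases hc : (σ m ∪ σ (m + 1)) ∈ wC n σ m
        · obtain ⟨hV, hC, _⟩ := hrep m hc
          rw [hV, hC]; exact hQm
        · obtain ⟨hV, hC⟩ := hnew m hm1 hmk' hc
          omega
  -- backward inequality: |V k| + |C j| ≤ |V j| + |C k|
  have hR : ∀ m j, k = j + m → 1 ≤ j →
      (wV n σ k).card + (wC n σ j).card ≤ (wV n σ j).card + (wC n σ k).card := by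
    intro m
    induction m with
    | zero =>
      intro j hj _
      have hjk : j = k := by omega
      rw [hjk]
    | succ p ih =>
      intro j hj hj1
      have hstep : (wV n σ (j + 1)).card + (wC n σ j).card ≤
          (wV n σ j).card + (wC n σ (j + 1)).card := by
        by_cases hc : (σ j ∪ σ (j + 1)) ∈ wC n σ j
        · obtain ⟨hV, hC, _⟩ := hrep j hc
          rw [hV, hC]
        · obtain ⟨hV, hC⟩ := hnew j hj1 (by omega) hc
          omega
      have := ih (j + 1) (by omega) (by omega)
      omega
  have hBk : (wC n σ k).card = k / 2 := by
    have h1 := hQ k (by omega) le_rfl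
    obtain ⟨c, hc⟩ := hke
    have hk2 : k / 2 = c := by omega
    omega
  -- equality in each new step
  have hneweq : ∀ j, 1 ≤ j → j < k → (σ j ∪ σ (j + 1)) ∉ wC n σ j →
      (wV n σ (j + 1)).card = (wV n σ j).card + 1 := by
    intro j hj1 hjk hjnew
    obtain ⟨hV, hC⟩ := hnew j hj1 hjk hjnew
    have h1 := hQ j hj1 (by omega)
    have h2 := hR (k - (j + 1)) (j + 1) (by omega) (by omega)
    omega
  -- new step increases the u-cell count by exactly choose d u
  have hUnew : ∀ j, 1 ≤ j → j < k → (σ j ∪ σ (j + 1)) ∉ wC n σ j →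
      (wU n σ u (j + 1)).card = (wU n σ u j).card + Nat.choose d u := by
    intro j hj1 hjk hjnew
    have heq := hneweq j hj1 hjk hjnew
    -- extract the unique new vertex
    have hone : ((σ j ∪ σ (j + 1)) \ wV n σ j).card = 1 := by
      have h1 := Finset.card_sdiff_add_card ((σ j ∪ σ (j + 1))) (wV n σ j)
      have h2 : wV n σ (j + 1) = (σ j ∪ σ (j + 1)) ∪ wV n σ j := wV_succ n σ j
      have hsub : (σ j ∪ σ (j + 1)) \ wV n σ j ⊆ (σ j ∪ σ (j + 1)) \ σ j :=
        Finset.sdiff_subset_sdiff (Finset.Subset.refl _) (hσV j hj1)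
      have hcards : ((σ j ∪ σ (j + 1)) \ σ j).card = 1 := by
        rw [Finset.card_sdiff_of_subset Finset.subset_union_left, hcell j hjk, hcard j (by omega)]
        omega
      have hle : ((σ j ∪ σ (j + 1)) \ wV n σ j).card ≤ 1 :=
        le_trans (Finset.card_le_card hsub) (le_of_eq hcards)
      rw [h2] at heq
      omega
    obtain ⟨v, hv⟩ := Finset.card_eq_one.1 hone
    have hvτ : v ∈ (σ j ∪ σ (j + 1)) := (Finset.mem_sdiff.1 (hv ▸ Finset.mem_singleton_self v)).1
    have hvV : v ∉ wV n σ j := (Finset.mem_sdiff.1 (hv ▸ Finset.mem_singleton_self v)).2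
    have hvσ : v ∉ σ j := fun h => hvV (hσV j hj1 h)
    -- σ j = ((σ j ∪ σ (j + 1))).erase v, hence (σ j ∪ σ (j + 1)) = insert v (σ j)
    have hσe : σ j = ((σ j ∪ σ (j + 1))).erase v := by
      apply Finset.eq_of_subset_of_card_le
      · exact Finset.subset_erase.2 ⟨Finset.subset_union_left, hvσ⟩
      · rw [Finset.card_erase_of_mem hvτ, hcell j hjk, hcard j (by omega)]
        omega
    have hτins : (σ j ∪ σ (j + 1)) = insert v (σ j) := by
      nth_rewrite 2 [hσe]
      rw [Finset.insert_erase hvτ]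
    -- previous step contains σ j
    obtain ⟨m, rfl⟩ := Nat.exists_eq_add_of_le hj1
    have hσprev : σ (1 + m) ⊆ (σ m ∪ σ (m + 1)) := by
      rw [Nat.add_comm 1 m]; exact Finset.subset_union_right
    -- split the powerset
    have hps : ((σ (1 + m) ∪ σ (1 + m + 1))).powersetCard (u + 1) =
        (σ (1 + m)).powersetCard (u + 1) ∪
          ((σ (1 + m)).powersetCard u).image (insert v) := by
      rw [hτins]
      exact Finset.powersetCard_succ_insert hvσ u
    have holdsub : (σ (1 + m)).powersetCard (u + 1) ⊆ wU n σ u (1 + m) := by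
      intro s hs
      rw [Finset.mem_powersetCard] at hs
      rw [wU, Finset.mem_biUnion]
      exact ⟨m, Finset.mem_range.2 (by omega),
        Finset.mem_powersetCard.2 ⟨hs.1.trans hσprev, hs.2⟩⟩
    have hdisj : Disjoint (((σ (1 + m)).powersetCard u).image (insert v))
        (wU n σ u (1 + m)) := by
      rw [Finset.disjoint_left]
      intro s hs hs'
      rw [Finset.mem_image] at hs
      obtain ⟨t, _, rfl⟩ := hs
      rw [wU, Finset.mem_biUnion] at hs'
      obtain ⟨i, hi, hsi⟩ := hs'
      rw [Finset.mem_range] at hi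
      have : v ∈ wV n σ (1 + m) :=
        hτV i (1 + m) hi ((Finset.mem_powersetCard.1 hsi).1 (Finset.mem_insert_self v t))
      exact hvV this
    have hcardimg : (((σ (1 + m)).powersetCard u).image (insert v)).card =
        Nat.choose d u := by
      rw [Finset.card_image_of_injOn, Finset.card_powersetCard, hcard (1 + m) (by omega)]
      intro s hs t ht hst
      have hvs : v ∉ s := fun h => hvσ ((Finset.mem_powersetCard.1 (Finset.mem_coe.1 hs)).1 h)
      have hvt : v ∉ t := fun h => hvσ ((Finset.mem_powersetCard.1 (Finset.mem_coe.1 ht)).1 h)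
      have := congrArg (fun x => Finset.erase x v) hst
      simpa [Finset.erase_insert hvs, Finset.erase_insert hvt] using this
    rw [wU_succ, hps,
      Finset.union_comm ((σ (1 + m)).powersetCard (u + 1))
        (((σ (1 + m)).powersetCard u).image (insert v)),
      Finset.union_assoc, Finset.union_eq_right.2 holdsub,
      Finset.card_union_of_disjoint hdisj]
    omega
  -- main induction for the u-cell count
  have hmain : ∀ j, 1 ≤ j → j ≤ k →
      (wU n σ u j).card + Nat.choose d u =
        Nat.choose (d + 1) (u + 1) + (wC n σ j).card * Nat.choose d u := by
    intro j
    induction j with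
    | zero => intro h; omega
    | succ m ih =>
      intro _ hmk
      rcases Nat.eq_or_lt_of_le (Nat.one_le_iff_ne_zero.2 (by omega) :
          (1 : ℕ) ≤ m + 1) with h1 | h1
      · have hm : m = 0 := by omega
        subst hm
        have hU1 : wU n σ u 1 = ((σ 0 ∪ σ 1)).powersetCard (u + 1) := by
          rw [wU_succ]; simp [wU]
        have hC1 : wC n σ 1 = {(σ 0 ∪ σ 1)} := by
          rw [wC_succ]; simp [wC]
        rw [hU1, hC1, Finset.card_powersetCard, hcell 0 (by omega), Finset.card_singleton,
          one_mul]
      · have hm1 : 1 ≤ m := by omega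
        have hmk' : m < k := by omega
        have hQm := ih hm1 (by omega)
        by_cases hc : (σ m ∪ σ (m + 1)) ∈ wC n σ m
        · obtain ⟨_, hC, hU⟩ := hrep m hc
          rw [hU, hC]; exact hQm
        · have hU := hUnew m hm1 hmk' hc
          have hC := (hnew m hm1 hmk' hc).2
          rw [hU, hC]
          ring_nf
          ring_nf at hQm
          omega
  -- conclude
  have hfin := hmain k (by omega) le_rfl
  rw [hBk] at hfin
  have hgoal : ((Finset.range k).biUnion
      (fun i => (σ i ∪ σ (i + 1)).powersetCard (u + 1))) = wU n σ u k := rfl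
  rw [hgoal]
  have hpascal : Nat.choose (d + 1) (u + 1) = Nat.choose d u + Nat.choose d (u + 1) :=
    Nat.choose_succ_succ d u
  omega
end

section
/- For every d ≥ 2, k ≥ 2 and d+1 ≤ s ≤ ⌊k/2⌋ + d, the number of equivalence classes of closed words of length k+1 with |supp₀(w)| = s and N_w(τ) ≠ 1 for every d-cell τ is at most (ds)^k. -/
/-!
Every closed word can be relabelled, keeping its equivalence class, so that its support is
`{0, …, s-1}` and its first letter is `{0, …, d-1}` (the first letter in increasing order).
Such a normalized word is determined by its first letter and its `k` steps, and each step
`σᵢ → σᵢ₊₁` removes one vertex of `σᵢ` and adds one vertex of `{0, …, s-1}`: recording the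
position of the removed vertex in `σᵢ` and the added vertex gives an injection of normalized
words into `(Fin d × Fin s)^k`.
-/

def ClosedWord (d k s : ℕ) : Type :=
  {σ : Fin (k + 1) → Finset ℕ //
    (∀ i, (σ i).card = d) ∧
    (∀ i : Fin k, (σ i.castSucc ∪ σ i.succ).card = d + 1) ∧
    σ (Fin.last k) = σ 0 ∧
    (Finset.univ.biUnion σ).card = s ∧
    ∀ τ : Finset ℕ,
      (Finset.univ.filter (fun i : Fin k => σ i.castSucc ∪ σ i.succ = τ)).card ≠ 1}

def WordEquiv (d k s : ℕ) (w w' : ClosedWord d k s) : Prop :=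
  ∃ π : ℕ → ℕ,
    Set.BijOn π ↑(Finset.univ.biUnion w.1) ↑(Finset.univ.biUnion w'.1) ∧
    (∀ i, (w.1 i).image π = w'.1 i) ∧
    StrictMonoOn π ↑(w.1 0)

open Finset

theorem Finset.card_sdiff_eq_one_of_card_union {α : Type*} [DecidableEq α] {a b : Finset α}
    {d : ℕ} (ha : #a = d) (hb : #b = d) (hab : #(a ∪ b) = d + 1) : #(a \ b) = 1 := by
  have := card_union_add_card_inter a b
  have := card_sdiff_add_card_inter a b
  omega

theorem Finset.eq_insert_erase_of_sdiff_eq_singleton {α : Type*} [DecidableEq α]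
    {a b : Finset α} {x y : α} (hx : a \ b = {x}) (hy : b \ a = {y}) :
    b = insert y (a.erase x) := by
  rw [← sdiff_singleton_eq_erase, ← hx, sdiff_sdiff_self_left, insert_eq, ← hy, inter_comm,
    sdiff_union_inter]

theorem Finset.card_filter_comp_ne_one {ι α β : Type*} [Fintype ι] [DecidableEq α]
    [DecidableEq β] {u : ι → α} {g : α → β} (hg : Set.InjOn g (Set.range u))
    (hu : ∀ a, #{i | u i = a} ≠ 1) (b : β) : #{i | g (u i) = b} ≠ 1 := by
  by_cases hb : ∃ j, g (u j) = b
  · obtain ⟨j, rfl⟩ := hb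
    have : ∀ i, g (u i) = g (u j) ↔ u i = u j := fun i =>
      hg.eq_iff (Set.mem_range_self i) (Set.mem_range_self j)
    simpa only [this] using hu (u j)
  · simp [filter_false_of_mem fun i _ => not_exists.1 hb i]

noncomputable def rankRelabel (A S : Finset ℕ) (x : ℕ) : ℕ :=
  if h : x ∈ A then (A.orderIsoOfFin rfl).symm ⟨x, h⟩
  else if h : x ∈ S \ A then #A + (S \ A).equivFin ⟨x, h⟩ else 0

section rankRelabel

variable {A S : Finset ℕ} {x : ℕ}

theorem rankRelabel_of_mem (h : x ∈ A) :
    rankRelabel A S x = (A.orderIsoOfFin rfl).symm ⟨x, h⟩ :=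
  dif_pos h

theorem rankRelabel_of_mem_sdiff (h : x ∈ S \ A) :
    rankRelabel A S x = #A + (S \ A).equivFin ⟨x, h⟩ :=
  (dif_neg (mem_sdiff.1 h).2).trans (dif_pos h)

theorem strictMonoOn_rankRelabel : StrictMonoOn (rankRelabel A S) A := fun x hx y hy hxy => by
  rw [rankRelabel_of_mem hx, rankRelabel_of_mem hy]
  exact (A.orderIsoOfFin rfl).symm.strictMono (Subtype.mk_lt_mk.2 hxy)

theorem image_rankRelabel_self : A.image (rankRelabel A S) = range #A := by
  refine eq_of_subset_of_card_le (fun n hn => ?_) ?_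
  · obtain ⟨x, hx, rfl⟩ := mem_image.1 hn
    simp [rankRelabel_of_mem hx]
  · rw [card_range, card_image_of_injOn strictMonoOn_rankRelabel.injOn]

theorem image_rankRelabel_subset (hAS : A ⊆ S) : S.image (rankRelabel A S) ⊆ range #S := by
  intro n hn
  obtain ⟨x, hxS, rfl⟩ := mem_image.1 hn
  rw [mem_range]
  by_cases hxA : x ∈ A
  · simpa [rankRelabel_of_mem hxA] using (((A.orderIsoOfFin rfl).symm ⟨x, hxA⟩).2.trans_le
      (card_le_card hAS))
  · have hx : x ∈ S \ A := mem_sdiff.2 ⟨hxS, hxA⟩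
    have := ((S \ A).equivFin ⟨x, hx⟩).2
    have := card_sdiff_of_subset hAS
    rw [rankRelabel_of_mem_sdiff hx]
    omega

theorem range_subset_image_rankRelabel (hAS : A ⊆ S) :
    range #S ⊆ S.image (rankRelabel A S) := by
  intro n hn
  rw [mem_range] at hn
  by_cases hnA : n < #A
  · set x := A.orderIsoOfFin rfl ⟨n, hnA⟩
    refine mem_image.2 ⟨x, hAS x.2, ?_⟩
    rw [rankRelabel_of_mem x.2]
    simp only [x, Subtype.coe_eta, OrderIso.symm_apply_apply]
  · have hnB : n - #A < #(S \ A) := by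
      rw [card_sdiff_of_subset hAS]
      omega
    set x := (S \ A).equivFin.symm ⟨n - #A, hnB⟩
    refine mem_image.2 ⟨x, (mem_sdiff.1 x.2).1, ?_⟩
    simp only [rankRelabel_of_mem_sdiff x.2, x, Subtype.coe_eta, Equiv.apply_symm_apply]
    omega

theorem image_rankRelabel (hAS : A ⊆ S) : S.image (rankRelabel A S) = range #S :=
  (image_rankRelabel_subset hAS).antisymm (range_subset_image_rankRelabel hAS)

theorem injOn_rankRelabel (hAS : A ⊆ S) : Set.InjOn (rankRelabel A S) S :=
  card_image_iff.1 (by rw [image_rankRelabel hAS, card_range])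

end rankRelabel

def IsStep (d : ℕ) (a b : Finset ℕ) : Prop := #a = d ∧ #b = d ∧ #(a ∪ b) = d + 1

/-- Along a step `a → b` both `a \ b` and `b \ a` are singletons, so the two `sInf`s are the
removed and the added vertex. -/
noncomputable def stepCode (a b : Finset ℕ) : ℕ × ℕ :=
  ((a.sort (· ≤ ·)).idxOf (sInf ↑(a \ b)), sInf ↑(b \ a))

namespace IsStep

variable {d : ℕ} {a b b' : Finset ℕ}

theorem symm (h : IsStep d a b) : IsStep d b a :=
  ⟨h.2.1, h.1, union_comm a b ▸ h.2.2⟩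

theorem sdiff_eq_singleton (h : IsStep d a b) : a \ b = {sInf ↑(a \ b)} := by
  obtain ⟨x, hx⟩ := card_eq_one.1 (card_sdiff_eq_one_of_card_union h.1 h.2.1 h.2.2)
  simp [hx]

theorem sInf_sdiff_mem (h : IsStep d a b) : sInf ↑(a \ b) ∈ a \ b := by
  rw [h.sdiff_eq_singleton]
  simp

theorem stepCode_fst_lt (h : IsStep d a b) : (stepCode a b).1 < d := by
  have hmem := (mem_sort (· ≤ ·)).2 (mem_sdiff.1 h.sInf_sdiff_mem).1
  simpa only [stepCode, length_sort, h.1] using List.idxOf_lt_length_iff.2 hmem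

theorem stepCode_snd_mem (h : IsStep d a b) : (stepCode a b).2 ∈ b :=
  (mem_sdiff.1 h.symm.sInf_sdiff_mem).1

theorem eq_of_stepCode_eq (h : IsStep d a b) (h' : IsStep d a b')
    (hcode : stepCode a b = stepCode a b') : b = b' := by
  have hremoved : sInf (↑(a \ b) : Set ℕ) = sInf ↑(a \ b') :=
    (List.idxOf_inj ((mem_sort _).2 (mem_sdiff.1 h.sInf_sdiff_mem).1)).1
      (congrArg Prod.fst hcode)
  have hadded : sInf (↑(b \ a) : Set ℕ) = sInf ↑(b' \ a) := congrArg Prod.snd hcode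
  rw [eq_insert_erase_of_sdiff_eq_singleton h.sdiff_eq_singleton h.symm.sdiff_eq_singleton,
    eq_insert_erase_of_sdiff_eq_singleton h'.sdiff_eq_singleton h'.symm.sdiff_eq_singleton,
    hremoved, hadded]

end IsStep

namespace ClosedWord

variable {d k s : ℕ}

theorem isStep (w : ClosedWord d k s) (i : Fin k) : IsStep d (w.1 i.castSucc) (w.1 i.succ) :=
  ⟨w.2.1 _, w.2.1 _, w.2.2.1 i⟩

theorem letter_subset_supp (w : ClosedWord d k s) (i : Fin (k + 1)) :
    w.1 i ⊆ univ.biUnion w.1 :=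
  subset_biUnion_of_mem w.1 (mem_univ i)

theorem step_subset_supp (w : ClosedWord d k s) (i : Fin k) :
    w.1 i.castSucc ∪ w.1 i.succ ⊆ univ.biUnion w.1 :=
  union_subset (w.letter_subset_supp _) (w.letter_subset_supp _)

def relabel (w : ClosedWord d k s) (π : ℕ → ℕ) (hπ : Set.InjOn π ↑(univ.biUnion w.1)) :
    ClosedWord d k s := by
  refine ⟨fun i => (w.1 i).image π, fun i => ?_, fun i => ?_, ?_, ?_, fun τ => ?_⟩
  · rw [card_image_of_injOn (hπ.mono (coe_subset.2 (w.letter_subset_supp i))), w.2.1 i]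
  · rw [← image_union, card_image_of_injOn (hπ.mono (coe_subset.2 (w.step_subset_supp i))),
      w.2.2.1 i]
  · exact congrArg (image π) w.2.2.2.1
  · rw [← biUnion_image, card_image_of_injOn hπ, w.2.2.2.2.1]
  · simp only [← image_union]
    refine card_filter_comp_ne_one (u := fun i : Fin k => w.1 i.castSucc ∪ w.1 i.succ) ?_
      w.2.2.2.2.2 τ
    rintro _ ⟨i, rfl⟩ _ ⟨j, rfl⟩
    exact (image_eq_image_iff_of_injOn hπ (w.step_subset_supp i) (w.step_subset_supp j)).1

theorem wordEquiv_relabel (w : ClosedWord d k s) (π : ℕ → ℕ)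
    (hπ : Set.InjOn π ↑(univ.biUnion w.1)) (hmono : StrictMonoOn π ↑(w.1 0)) :
    WordEquiv d k s w (w.relabel π hπ) := by
  refine ⟨π, ?_, fun i => rfl, hmono⟩
  simpa only [relabel, ← biUnion_image, coe_image] using hπ.bijOn_image

end ClosedWord

def NormalWord (d k s : ℕ) : Type :=
  {w : ClosedWord d k s // univ.biUnion w.1 = range s ∧ w.1 0 = range d}

namespace NormalWord

variable {d k s : ℕ}

theorem stepCode_snd_lt (w : NormalWord d k s) (i : Fin k) :
    (stepCode (w.1.1 i.castSucc) (w.1.1 i.succ)).2 < s := by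
  have hsub := w.1.letter_subset_supp i.succ
  rw [w.2.1] at hsub
  exact mem_range.1 (hsub (w.1.isStep i).stepCode_snd_mem)

noncomputable def code (w : NormalWord d k s) (i : Fin k) : Fin d × Fin s :=
  (⟨_, (w.1.isStep i).stepCode_fst_lt⟩, ⟨_, w.stepCode_snd_lt i⟩)

theorem code_injective : Function.Injective (code : NormalWord d k s → _) := by
  intro w w' hcode
  suffices ∀ i, w.1.1 i = w'.1.1 i from Subtype.ext (Subtype.ext (funext this))
  intro i
  induction i using Fin.induction with
  | zero => rw [w.2.2, w'.2.2]
  | succ i ih =>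
    have hstep := congrFun hcode i
    simp only [code, Prod.mk.injEq, Fin.mk.injEq, ← ih] at hstep
    exact (w.1.isStep i).eq_of_stepCode_eq (ih ▸ w'.1.isStep i) (Prod.ext hstep.1 hstep.2)

instance : Finite (NormalWord d k s) :=
  Finite.of_injective code code_injective

theorem card_le : Nat.card (NormalWord d k s) ≤ (d * s) ^ k :=
  (Nat.card_le_card_of_injective code code_injective).trans_eq (by simp)

theorem exists_wordEquiv (w : ClosedWord d k s) :
    ∃ c : NormalWord d k s, WordEquiv d k s w c.1 := by
  have hsub := w.letter_subset_supp 0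
  have hinj := injOn_rankRelabel hsub
  refine ⟨⟨w.relabel _ hinj, ?_, ?_⟩, w.wordEquiv_relabel _ hinj strictMonoOn_rankRelabel⟩
  · simpa only [ClosedWord.relabel, ← biUnion_image, w.2.2.2.2.1] using image_rankRelabel hsub
  · simpa only [ClosedWord.relabel, w.2.1 0] using
      image_rankRelabel_self (A := w.1 0) (S := univ.biUnion w.1)

end NormalWord

theorem stmt2_general (d k s : ℕ) :
    Finite (Quot (WordEquiv d k s)) ∧
      Nat.card (Quot (WordEquiv d k s)) ≤ (d * s) ^ k := by
  have hsurj : Function.Surjective fun c : NormalWord d k s => Quot.mk (WordEquiv d k s) c.1 := by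
    rintro ⟨w⟩
    obtain ⟨c, hc⟩ := NormalWord.exists_wordEquiv w
    exact ⟨c, (Quot.sound hc).symm⟩
  exact ⟨Finite.of_surjective _ hsurj,
    (Nat.card_le_card_of_surjective _ hsurj).trans NormalWord.card_le⟩

/-- For `d ≥ 2`, `k ≥ 2` and `d+1 ≤ s ≤ ⌊k/2⌋ + d`, the set `𝒲ₛᵏ` of
equivalence classes of closed words of length `k+1` with vertex support of size `s` and
`N_w(τ) ≠ 1` for all `d`-cells `τ` is finite of cardinality at most `(ds)^k`. -/
theorem stmt2 (d k s : ℕ) (hd : 2 ≤ d) (hk : 2 ≤ k) (hs1 : d + 1 ≤ s)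
    (hs2 : s ≤ k / 2 + d) :
    Finite (Quot (WordEquiv d k s)) ∧
      Nat.card (Quot (WordEquiv d k s)) ≤ (d * s) ^ k :=
  stmt2_general d k s
end

section
/- Suppose min_{1 ≤ i ≤ d-1} liminf_n p_i > 0 and n·p_d / log n → ∞. Then almost surely, for all sufficiently large n, the multi-parameter random simplicial complex Y_d(n,p) contains no maximal (d-1)-cell. -/
open MeasureTheory ProbabilityTheory Filter

/-- A set `σ` belongs to the multi-parameter random simplicial complex (for outcome `ω`)
iff every subset `τ ⊆ σ` with `|τ| ≥ 2` is marked. -/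
def memY {n : ℕ} (mark : Finset (Fin n) → Bool) (σ : Finset (Fin n)) : Prop :=
  ∀ τ ∈ σ.powerset, 2 ≤ τ.card → mark τ = true

instance {n : ℕ} (mark : Finset (Fin n) → Bool) : DecidablePred (memY mark) := by
  unfold memY; infer_instance

/-- The number of maximal `(d-1)`-cells of the complex. -/
def numMaximal (n d : ℕ) (mark : Finset (Fin n) → Bool) : ℕ :=
  ((Finset.univ.powersetCard d).filter
    (fun σ => memY mark σ ∧ ∀ v : Fin n, v ∉ σ → ¬ memY mark (insert v σ))).card

/-! A `(d-1)`-cell `σ ∈ Y` is maximal only if, for every vertex `v ∉ σ`, some face of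
`σ ∪ {v}` through `v` is unmarked. These families of faces are disjoint for distinct `v`, so
the `n - d` events are independent, each of probability at most `1 - q` where
`q ≥ c ^ 2 ^ (d + 1) * p_d` and `c > 0` eventually bounds `p_1, …, p_{d-1}` from below. Hence
`P(N_{d-1} ≠ 0) ≤ C(n, d) exp (-(n - d) q) ≤ n⁻²` once `n p_d / log n` is large, and
Borel–Cantelli concludes. -/

open Real Finset Topology
open scoped ENNReal

section IndependentBits

variable {Ω ι : Type*} [MeasurableSpace Ω] {μ : Measure Ω} {f : ι → Ω → Bool}

lemma measure_exists_eq_false [IsProbabilityMeasure μ] (hf : ∀ i, Measurable (f i))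
    (hindep : iIndepFun f μ) (S : Finset ι) :
    μ {ω | ∃ i ∈ S, f i ω = false} = 1 - ∏ i ∈ S, μ {ω | f i ω = true} := by
  have hcompl : {ω | ∃ i ∈ S, f i ω = false} = {ω | ∀ i ∈ S, f i ω = true}ᶜ := by
    ext ω; simp
  have hmeas : MeasurableSet {ω | ∀ i ∈ S, f i ω = true} := by
    simp only [Set.ofPred_forall]
    exact .biInter S.countable_toSet fun i _ => hf i (.singleton true)
  rw [hcompl, prob_compl_eq_one_sub hmeas]
  congr 1
  simp only [Set.ofPred_forall]
  exact hindep.meas_biInter fun i _ => ⟨{true}, trivial, rfl⟩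

lemma measure_forall_exists_eq_false {κ : Type*} [IsProbabilityMeasure μ]
    (hf : ∀ i, Measurable (f i)) (hindep : iIndepFun f μ) {S : κ → Finset ι} {F : Finset κ}
    (hdisj : (F : Set κ).PairwiseDisjoint S) :
    μ {ω | ∀ k ∈ F, ∃ i ∈ S k, f i ω = false} = ∏ k ∈ F, μ {ω | ∃ i ∈ S k, f i ω = false} := by
  classical
  induction F using Finset.induction_on with
  | empty => simp
  | @insert k₀ F hk₀ ih =>
    rw [coe_insert] at hdisj
    rw [prod_insert hk₀, ← ih (hdisj.subset (Set.subset_insert _ _))]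
    have hST : Disjoint (S k₀) (F.biUnion S) :=
      (disjoint_biUnion_right _ _ _).2 fun k hk =>
        hdisj (Set.mem_insert _ _) (Set.mem_insert_of_mem _ hk) (ne_of_mem_of_not_mem hk hk₀).symm
    have hsplit : {ω | ∀ k ∈ insert k₀ F, ∃ i ∈ S k, f i ω = false} =
        {ω | ∃ i ∈ S k₀, f i ω = false} ∩ {ω | ∀ k ∈ F, ∃ i ∈ S k, f i ω = false} := by
      ext ω; simp
    have hhead : {ω | ∃ i ∈ S k₀, f i ω = false} =
        (fun ω (i : S k₀) => f i ω) ⁻¹' {x | ∃ i, x i = false} := by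
      ext ω; simp
    have htail : {ω | ∀ k ∈ F, ∃ i ∈ S k, f i ω = false} =
        (fun ω (i : F.biUnion S) => f i ω) ⁻¹'
          {x | ∀ k ∈ F, ∃ i : F.biUnion S, ↑i ∈ S k ∧ x i = false} := by
      ext ω
      simp only [Set.mem_ofPred_eq, Set.mem_preimage, Subtype.exists, mem_biUnion]
      grind
    rw [hsplit, hhead, htail]
    exact (hindep.indepFun_finset _ _ hST hf).measure_inter_preimage_eq_mul _ _
      .of_discrete .of_discrete

end IndependentBits

section StarFaces

variable {α : Type*} [DecidableEq α]

/-- Given `σ ∈ Y`, the cell `insert v σ` lies in `Y` iff all of these faces are marked. -/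
def starFaces (σ : Finset α) (v : α) : Finset (Finset α) :=
  (insert v σ).powerset.filter fun τ => v ∈ τ ∧ 2 ≤ τ.card

@[simp]
lemma mem_starFaces {σ τ : Finset α} {v : α} :
    τ ∈ starFaces σ v ↔ τ ⊆ insert v σ ∧ v ∈ τ ∧ 2 ≤ τ.card := by
  simp [starFaces]

lemma pairwiseDisjoint_starFaces (σ : Finset α) :
    ((σ : Set α)ᶜ).PairwiseDisjoint (starFaces σ) := by
  intro v hv w _ hvw
  refine disjoint_left.2 fun τ hτv hτw => ?_
  rcases mem_insert.1 ((mem_starFaces.1 hτw).1 (mem_starFaces.1 hτv).2.1) with h | h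
  · exact hvw h
  · exact hv h

lemma card_starFaces_le (σ : Finset α) (v : α) : (starFaces σ v).card ≤ 2 ^ (σ.card + 1) :=
  calc (starFaces σ v).card ≤ (insert v σ).powerset.card := card_filter_le _ _
    _ ≤ 2 ^ (σ.card + 1) := by
      rw [card_powerset]
      exact Nat.pow_le_pow_right two_pos (card_insert_le v σ)

lemma card_mem_starFaces {σ τ : Finset α} {v : α} (hv : v ∉ σ) (hτ : τ ∈ starFaces σ v) :
    2 ≤ τ.card ∧ τ.card ≤ σ.card + 1 :=
  ⟨(mem_starFaces.1 hτ).2.2,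
    (card_le_card (mem_starFaces.1 hτ).1).trans_eq (card_insert_of_notMem hv)⟩

lemma pow_mul_le_prod_starFaces {M : Type*} [CommMonoid M] [PartialOrder M] [IsOrderedMonoid M]
    {σ : Finset α} {v : α} (hv : v ∉ σ) (hσ : 1 ≤ σ.card) {w : ℕ → M} {c : M} (hc1 : c ≤ 1)
    (hc : ∀ i, 1 ≤ i → i < σ.card → c ≤ w i) :
    c ^ 2 ^ (σ.card + 1) * w σ.card ≤ ∏ τ ∈ starFaces σ v, w (τ.card - 1) := by
  have htop : insert v σ ∈ starFaces σ v := by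
    rw [mem_starFaces, card_insert_of_notMem hv]
    exact ⟨subset_rfl, mem_insert_self v σ, by omega⟩
  rw [← mul_prod_erase _ _ htop, card_insert_of_notMem hv, Nat.add_sub_cancel, mul_comm]
  gcongr
  calc c ^ 2 ^ (σ.card + 1) ≤ c ^ ((starFaces σ v).erase (insert v σ)).card :=
        pow_le_pow_right_of_le_one' hc1
          ((card_erase_le).trans (card_starFaces_le σ v))
    _ ≤ _ := pow_card_le_prod _ _ _ fun τ hτ => by
        obtain ⟨hne, hτ⟩ := mem_erase.1 hτ
        have hlt : τ.card < (insert v σ).card :=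
          card_lt_card (Finset.ssubset_iff_subset_ne.2 ⟨(mem_starFaces.1 hτ).1, hne⟩)
        rw [card_insert_of_notMem hv] at hlt
        exact hc _ (by have := (mem_starFaces.1 hτ).2.2; omega) (by omega)

variable {n : ℕ}

lemma exists_mem_starFaces_eq_false {m : Finset (Fin n) → Bool} {σ : Finset (Fin n)}
    {v : Fin n} (hσ : memY m σ) (hvσ : ¬ memY m (insert v σ)) :
    ∃ τ ∈ starFaces σ v, m τ = false := by
  simp only [memY, mem_powerset, not_forall, Bool.not_eq_true, exists_prop] at hσ hvσ
  obtain ⟨τ, hτ, hτ2, hτm⟩ := hvσ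
  refine ⟨τ, mem_starFaces.2 ⟨hτ, ?_, hτ2⟩, hτm⟩
  by_contra hvτ
  have : τ ⊆ σ := fun x hx => (mem_insert.1 (hτ hx)).resolve_left (by rintro rfl; exact hvτ hx)
  simp [hσ τ this hτ2] at hτm

end StarFaces

def IsMaximalCell {n : ℕ} (m : Finset (Fin n) → Bool) (σ : Finset (Fin n)) : Prop :=
  memY m σ ∧ ∀ v : Fin n, v ∉ σ → ¬ memY m (insert v σ)

section RandomComplex

variable {Ω : Type*} [MeasurableSpace Ω] {μ : Measure Ω} {n : ℕ}
  {mark : Finset (Fin n) → Ω → Bool}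

lemma measure_isMaximalCell_le [IsProbabilityMeasure μ] (hmeas : ∀ τ, Measurable (mark τ))
    (hindep : iIndepFun mark μ) (σ : Finset (Fin n)) {q : ℝ≥0∞}
    (hq : ∀ v ∉ σ, q ≤ ∏ τ ∈ starFaces σ v, μ {ω | mark τ ω = true}) :
    μ {ω | IsMaximalCell (mark · ω) σ} ≤ (1 - q) ^ (n - σ.card) :=
  calc μ {ω | IsMaximalCell (mark · ω) σ}
      ≤ μ {ω | ∀ v ∈ univ \ σ, ∃ τ ∈ starFaces σ v, mark τ ω = false} :=
        measure_mono fun ω hω v hv =>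
          exists_mem_starFaces_eq_false hω.1 (hω.2 v (mem_sdiff.1 hv).2)
    _ = ∏ v ∈ univ \ σ, μ {ω | ∃ τ ∈ starFaces σ v, mark τ ω = false} :=
        measure_forall_exists_eq_false hmeas hindep
          ((pairwiseDisjoint_starFaces σ).subset (by simp))
    _ ≤ ∏ _v ∈ univ \ σ, (1 - q) := prod_le_prod' fun v hv => by
        rw [measure_exists_eq_false hmeas hindep]
        exact tsub_le_tsub_left (hq v (mem_sdiff.1 hv).2) 1
    _ = (1 - q) ^ (n - σ.card) := by
        rw [prod_const, card_sdiff_of_subset (subset_univ σ), card_univ, Fintype.card_fin]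

lemma measure_numMaximal_ne_zero_le (d : ℕ) {b : ℝ≥0∞}
    (hb : ∀ σ : Finset (Fin n), σ.card = d → μ {ω | IsMaximalCell (mark · ω) σ} ≤ b) :
    μ {ω | numMaximal n d (mark · ω) ≠ 0} ≤ n.choose d * b :=
  calc μ {ω | numMaximal n d (mark · ω) ≠ 0}
      ≤ μ (⋃ σ ∈ univ.powersetCard d, {ω | IsMaximalCell (mark · ω) σ}) :=
        measure_mono fun ω hω => by
          obtain ⟨σ, hσ⟩ := card_ne_zero.1 hω
          exact Set.mem_biUnion (mem_filter.1 hσ).1 (mem_filter.1 hσ).2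
    _ ≤ ∑ σ ∈ univ.powersetCard d, μ {ω | IsMaximalCell (mark · ω) σ} :=
        measure_biUnion_finset_le _ _
    _ ≤ ∑ _σ ∈ univ.powersetCard d, b :=
        sum_le_sum fun σ hσ => hb σ (mem_powersetCard.1 hσ).2
    _ = n.choose d * b := by simp

lemma one_sub_ofReal_le_ofReal_exp_neg (a : ℝ) :
    1 - ENNReal.ofReal a ≤ ENNReal.ofReal (exp (-a)) := by
  rcases le_total 0 a with ha | ha
  · rw [← ENNReal.ofReal_one, ← ENNReal.ofReal_sub _ ha]
    exact ENNReal.ofReal_le_ofReal (by linarith [add_one_le_exp (-a)])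
  · rw [ENNReal.ofReal_of_nonpos ha, tsub_zero, ← ENNReal.ofReal_one]
    exact ENNReal.ofReal_le_ofReal (one_le_exp (by linarith))

lemma measureReal_numMaximal_ne_zero_le [IsProbabilityMeasure μ] {d : ℕ} (hd : 1 ≤ d)
    (hmeas : ∀ τ, Measurable (mark τ)) (hindep : iIndepFun mark μ) {p : ℕ → ℝ}
    (hprob : ∀ τ : Finset (Fin n), 2 ≤ τ.card → τ.card ≤ d + 1 →
      μ {ω | mark τ ω = true} = ENNReal.ofReal (p (τ.card - 1)))
    {c : ℝ} (hc0 : 0 ≤ c) (hc1 : c ≤ 1) (hc : ∀ i, 1 ≤ i → i < d → c ≤ p i) :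
    μ.real {ω | numMaximal n d (mark · ω) ≠ 0}
      ≤ n.choose d * exp (-(c ^ 2 ^ (d + 1) * p d * (n - d : ℕ))) := by
  set a := c ^ 2 ^ (d + 1) * p d
  have hcell : ∀ σ : Finset (Fin n), σ.card = d →
      μ {ω | IsMaximalCell (mark · ω) σ} ≤ ENNReal.ofReal (exp (-a)) ^ (n - d) := by
    rintro σ rfl
    refine (measure_isMaximalCell_le hmeas hindep σ fun v hv => ?_).trans
      (pow_le_pow_left' (one_sub_ofReal_le_ofReal_exp_neg a) _)
    rw [prod_congr rfl fun τ hτ => hprob τ (card_mem_starFaces hv hτ).1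
      (card_mem_starFaces hv hτ).2, ENNReal.ofReal_mul (by positivity), ENNReal.ofReal_pow hc0]
    exact pow_mul_le_prod_starFaces hv hd (ENNReal.ofReal_le_one.2 hc1)
      fun i h1 h2 => ENNReal.ofReal_le_ofReal (hc i h1 h2)
  have hpow : exp (-(a * (n - d : ℕ))) = exp (-a) ^ (n - d) := by
    rw [← exp_nat_mul]
    ring_nf
  refine ENNReal.toReal_le_of_le_ofReal (by positivity)
    ((measure_numMaximal_ne_zero_le d hcell).trans_eq ?_)
  rw [hpow, ENNReal.ofReal_mul (Nat.cast_nonneg _), ENNReal.ofReal_natCast,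
    ENNReal.ofReal_pow (exp_nonneg _)]

end RandomComplex

lemma choose_mul_exp_le_inv_sq {n d : ℕ} {a : ℝ} (hdn : 2 * d ≤ n) (hn : 2 ≤ n)
    (ha : 2 * ((d : ℝ) + 2) ≤ a * n / log n) :
    (n.choose d : ℝ) * exp (-(a * (n - d : ℕ))) ≤ ((n : ℝ) ^ 2)⁻¹ := by
  have hn0 : (0 : ℝ) < n := by positivity
  have hlog : 0 < log n := log_pos (by exact_mod_cast hn)
  rw [le_div_iff₀ hlog] at ha
  have hsub : (n : ℝ) ≤ 2 * (n - d : ℕ) := by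
    have : 2 * (d : ℝ) ≤ n := by exact_mod_cast hdn
    rw [Nat.cast_sub (by omega)]
    linarith
  have ha0 : 0 ≤ a := by
    by_contra! h
    nlinarith
  have hexp : exp (-(a * (n - d : ℕ))) ≤ ((n : ℝ) ^ (d + 2))⁻¹ :=
    calc exp (-(a * (n - d : ℕ))) ≤ exp (-(((d + 2 : ℕ) : ℝ) * log n)) := by
          refine exp_le_exp.2 (neg_le_neg ?_)
          push_cast
          nlinarith [mul_le_mul_of_nonneg_left hsub ha0]
      _ = ((n : ℝ) ^ (d + 2))⁻¹ := by rw [exp_neg, ← log_pow, exp_log (by positivity)]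
  calc (n.choose d : ℝ) * exp (-(a * (n - d : ℕ))) ≤ (n : ℝ) ^ d * ((n : ℝ) ^ (d + 2))⁻¹ :=
        mul_le_mul (by exact_mod_cast n.choose_le_pow d) hexp (exp_nonneg _) (by positivity)
    _ = ((n : ℝ) ^ 2)⁻¹ := by
        rw [pow_add]
        field_simp

lemma ae_eventually_notMem_of_measureReal_le {Ω : Type*} [MeasurableSpace Ω] {μ : Measure Ω}
    [IsFiniteMeasure μ] {s : ℕ → Set Ω} {g : ℕ → ℝ} (hg : Summable g)
    (h : ∀ᶠ n in atTop, μ.real (s n) ≤ g n) :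
    ∀ᵐ ω ∂μ, ∀ᶠ n in atTop, ω ∉ s n := by
  have hs : Summable fun n => μ.real (s n) :=
    hg.of_norm_bounded_eventually_nat (h.mono fun n hn => by
      rwa [Real.norm_of_nonneg measureReal_nonneg])
  refine ae_eventually_notMem ?_
  have hμ : (fun n => μ (s n)) = fun n => ENNReal.ofReal (μ.real (s n)) :=
    funext fun n => (ofReal_measureReal).symm
  rw [hμ, ← ENNReal.ofReal_tsum_of_nonneg (fun _ => measureReal_nonneg) hs]
  exact ENNReal.ofReal_ne_top

/-- In `ℝ`, `sSup ∅ = 0`: a positive `liminf` forces the set of eventual lower bounds to be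
nonempty. -/
lemma isBoundedUnder_ge_of_liminf_pos {β : Type*} {f : Filter β} {u : β → ℝ}
    (h : 0 < liminf u f) : f.IsBoundedUnder (· ≥ ·) u := by
  by_contra hu
  have hempty : {a | ∀ᶠ n in f, a ≤ u n} = ∅ :=
    Set.eq_empty_of_forall_notMem fun a ha => hu ⟨a, ha⟩
  rw [liminf_eq, hempty, Real.sSup_empty] at h
  exact h.false

lemma eventually_forall_le_of_liminf_pos {ι β : Type*} {f : Filter β} (s : Finset ι)
    {u : ι → β → ℝ} (h : ∀ i ∈ s, 0 < liminf (u i) f) :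
    ∀ᶠ c in 𝓝[>] (0 : ℝ), ∀ᶠ n in f, ∀ i ∈ s, c ≤ u i n := by
  simp only [eventually_all_finset]
  intro i hi
  filter_upwards [Ioo_mem_nhdsGT (h i hi)] with c hc
  exact (eventually_lt_of_lt_liminf hc.2 (isBoundedUnder_ge_of_liminf_pos (h i hi))).mono
    fun n => le_of_lt

theorem stmt7_general (d : ℕ) (hd : 2 ≤ d)
    (p : ℕ → ℕ → ℝ)
    (hliminf : ∀ i, 1 ≤ i → i ≤ d - 1 → 0 < Filter.liminf (fun n : ℕ => p n i) atTop)
    (hpd : Tendsto (fun n : ℕ => (n : ℝ) * p n d / Real.log n) atTop atTop)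
    {Ω : Type*} [MeasurableSpace Ω] (μ : Measure Ω) [IsProbabilityMeasure μ]
    (mark : ∀ n : ℕ, Finset (Fin n) → Ω → Bool)
    (hmeas : ∀ n τ, Measurable (mark n τ))
    (hindep : ∀ n, iIndepFun (mark n) μ)
    (hprob : ∀ n, d + 1 ≤ n → ∀ τ : Finset (Fin n), 2 ≤ τ.card → τ.card ≤ d + 1 →
      μ {ω | mark n τ ω = true} = ENNReal.ofReal (p n (τ.card - 1))) :
    ∀ᵐ ω ∂μ, ∀ᶠ n in atTop, numMaximal n d (fun τ => mark n τ ω) = 0 := by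
  obtain ⟨c, hcp, hc0, hc1⟩ := ((eventually_forall_le_of_liminf_pos (Icc 1 (d - 1))
    (u := fun i n => p n i) fun i hi => hliminf i (mem_Icc.1 hi).1 (mem_Icc.1 hi).2).and
    (Ioc_mem_nhdsGT one_pos)).exists
  have hgrowth : ∀ᶠ n : ℕ in atTop, 2 * ((d : ℝ) + 2) ≤ c ^ 2 ^ (d + 1) * p n d * n / log n :=
    ((hpd.const_mul_atTop (pow_pos hc0 (2 ^ (d + 1)))).eventually_ge_atTop
      (2 * ((d : ℝ) + 2))).mono fun n hn => by rwa [mul_assoc, mul_comm (p n d), mul_div_assoc]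
  refine (ae_eventually_notMem_of_measureReal_le (Real.summable_nat_pow_inv.2 one_lt_two)
    (s := fun n => {ω | numMaximal n d (mark n · ω) ≠ 0}) ?_).mono
    fun ω hω => hω.mono fun n hn => not_not.1 hn
  filter_upwards [hcp, hgrowth, eventually_ge_atTop (d + 1), eventually_ge_atTop (2 * d)]
    with n hcn hgn hdn h2d
  calc μ.real {ω | numMaximal n d (mark n · ω) ≠ 0}
      ≤ n.choose d * exp (-(c ^ 2 ^ (d + 1) * p n d * (n - d : ℕ))) :=
        measureReal_numMaximal_ne_zero_le (by omega) (hmeas n) (hindep n) (hprob n hdn)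
          hc0.le hc1 fun i h1 h2 => hcn i (mem_Icc.2 ⟨h1, by omega⟩)
    _ ≤ ((n : ℝ) ^ 2)⁻¹ := choose_mul_exp_le_inv_sq h2d (by omega) hgn

/-- If `min_{1≤i≤d-1} liminf pᵢ > 0` and `n·p_d/log n → ∞`, then almost
surely, for all sufficiently large `n`, `Y_d(n,p)` contains no maximal `(d-1)`-cell
(the complexes for different `n` being coupled on a common probability space). -/
theorem stmt7 (d : ℕ) (hd : 2 ≤ d)
    (p : ℕ → ℕ → ℝ)
    (hp : ∀ n, d + 1 ≤ n → ∀ i, 1 ≤ i → i ≤ d → p n i ∈ Set.Ioc (0 : ℝ) 1)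
    (hliminf : ∀ i, 1 ≤ i → i ≤ d - 1 → 0 < Filter.liminf (fun n : ℕ => p n i) atTop)
    (hpd : Tendsto (fun n : ℕ => (n : ℝ) * p n d / Real.log n) atTop atTop)
    {Ω : Type*} [MeasurableSpace Ω] (μ : Measure Ω) [IsProbabilityMeasure μ]
    (mark : ∀ n : ℕ, Finset (Fin n) → Ω → Bool)
    (hmeas : ∀ n τ, Measurable (mark n τ))
    (hindep : ∀ n, iIndepFun (mark n) μ)
    (hprob : ∀ n, d + 1 ≤ n → ∀ τ : Finset (Fin n), 2 ≤ τ.card → τ.card ≤ d + 1 →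
      μ {ω | mark n τ ω = true} = ENNReal.ofReal (p n (τ.card - 1))) :
    ∀ᵐ ω ∂μ, ∀ᶠ n in atTop, numMaximal n d (fun τ => mark n τ ω) = 0 :=
  stmt7_general d hd p hliminf hpd μ mark hmeas hindep hprob
end

section
/- For any N × N Hermitian matrices A and B, any real λ, any ε > 0, and any t > 0: μ_{(A+B)/t}(−∞, λ) ≤ μ_{A/t}(−∞, λ + ε√N/t) + ‖B‖_F² / (ε² N²), where μ_M denotes the empirical spectral measure (the uniform probability measure on the eigenvalues of M, with multiplicity) and ‖·‖_F the Frobenius norm. -/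
/-!
Write `X = Y + C` with `X = (A + B)/t`, `Y = A/t`, `C = B/t`. The quadratic form of `X` is at most
`l‖v‖²` on the span of the eigenvectors of `X` with eigenvalue `< l`; that of `Y` is at least
`(l + δ)‖v‖²` on the span of the eigenvectors of `Y` with eigenvalue `≥ l + δ`; that of `C` is
`> -δ‖v‖²` on the nonzero vectors of the span of the eigenvectors of `C` with eigenvalue `> -δ`.
As `X = Y + C`, these three spans meet only in `0`, and counting dimensions gives
`#{X < l} ≤ #{Y < l + δ} + #{C ≤ -δ}`. Chebyshev's inequality together with
`∑ λᵢ(C)² = ‖C‖_F²` bounds the last term by `‖C‖_F² / δ²`; finally take `δ = ε√N / t`.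
-/

open Finset Matrix
open scoped InnerProductSpace

namespace Matrix.IsHermitian

variable {𝕜 n : Type*} [RCLike 𝕜] [Fintype n] [DecidableEq n] {A : Matrix n n 𝕜}
  (hA : A.IsHermitian)

noncomputable def eigenvectorSpan (s : Finset n) : Submodule 𝕜 (EuclideanSpace 𝕜 n) :=
  Submodule.span 𝕜 (hA.eigenvectorBasis '' s)

lemma finrank_eigenvectorSpan (s : Finset n) :
    Module.finrank 𝕜 (hA.eigenvectorSpan s) = #s := by
  rw [eigenvectorSpan, Set.image_eq_range, finrank_span_eq_card]
  · simp
  exact hA.eigenvectorBasis.orthonormal.linearIndependent.comp _ Subtype.val_injective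

lemma repr_eq_zero_of_mem_eigenvectorSpan {s : Finset n} {v : EuclideanSpace 𝕜 n}
    (hv : v ∈ hA.eigenvectorSpan s) {i : n} (hi : i ∉ s) : hA.eigenvectorBasis.repr v i = 0 := by
  have hle : hA.eigenvectorSpan s ≤ (𝕜 ∙ hA.eigenvectorBasis i)ᗮ := by
    refine Submodule.span_le.2 ?_
    rintro _ ⟨j, hj, rfl⟩
    exact Submodule.mem_orthogonal_singleton_iff_inner_right.2 <|
      hA.eigenvectorBasis.orthonormal.2 (ne_of_mem_of_not_mem hj hi).symm
  rw [OrthonormalBasis.repr_apply_apply]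
  exact Submodule.mem_orthogonal_singleton_iff_inner_right.1 (hle hv)

lemma toEuclideanLin_eigenvectorBasis (i : n) :
    toEuclideanLin A (hA.eigenvectorBasis i) = (hA.eigenvalues i : 𝕜) • hA.eigenvectorBasis i := by
  ext j
  have := congrFun (hA.mulVec_eigenvectorBasis i) j
  simp [this, RCLike.real_smul_eq_coe_mul]

lemma repr_toEuclideanLin (v : EuclideanSpace 𝕜 n) (i : n) :
    hA.eigenvectorBasis.repr (toEuclideanLin A v) i =
      hA.eigenvalues i * hA.eigenvectorBasis.repr v i := by
  rw [OrthonormalBasis.repr_apply_apply, OrthonormalBasis.repr_apply_apply,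
    ← (isSymmetric_toEuclideanLin_iff.2 hA) _ v, toEuclideanLin_eigenvectorBasis, inner_smul_left,
    RCLike.conj_ofReal]

lemma re_inner_toEuclideanLin_sub_mul_norm_sq (v : EuclideanSpace 𝕜 n) (c : ℝ) :
    RCLike.re ⟪v, toEuclideanLin A v⟫_𝕜 - c * ‖v‖ ^ 2 =
      ∑ i, (hA.eigenvalues i - c) * ‖hA.eigenvectorBasis.repr v i‖ ^ 2 := by
  rw [← hA.eigenvectorBasis.repr.inner_map_map, ← hA.eigenvectorBasis.repr.norm_map,
    EuclideanSpace.norm_sq_eq, PiLp.inner_apply, map_sum, mul_sum, ← sum_sub_distrib]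
  refine sum_congr rfl fun i _ => ?_
  rw [repr_toEuclideanLin, RCLike.inner_apply, mul_assoc, RCLike.mul_conj, ← RCLike.ofReal_pow,
    ← RCLike.ofReal_mul, RCLike.ofReal_re, sub_mul]

lemma re_inner_toEuclideanLin_sub_mul_norm_sq_of_mem {s : Finset n} {v : EuclideanSpace 𝕜 n}
    (hv : v ∈ hA.eigenvectorSpan s) (c : ℝ) :
    RCLike.re ⟪v, toEuclideanLin A v⟫_𝕜 - c * ‖v‖ ^ 2 =
      ∑ i ∈ s, (hA.eigenvalues i - c) * ‖hA.eigenvectorBasis.repr v i‖ ^ 2 := by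
  rw [re_inner_toEuclideanLin_sub_mul_norm_sq, sum_subset (subset_univ s)]
  intro i _ hi
  simp [hA.repr_eq_zero_of_mem_eigenvectorSpan hv hi]

lemma re_inner_toEuclideanLin_le {s : Finset n} {c : ℝ} (hc : ∀ i ∈ s, hA.eigenvalues i ≤ c)
    {v : EuclideanSpace 𝕜 n} (hv : v ∈ hA.eigenvectorSpan s) :
    RCLike.re ⟪v, toEuclideanLin A v⟫_𝕜 ≤ c * ‖v‖ ^ 2 := by
  rw [← sub_nonpos, hA.re_inner_toEuclideanLin_sub_mul_norm_sq_of_mem hv]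
  exact sum_nonpos fun i hi => mul_nonpos_of_nonpos_of_nonneg (sub_nonpos.2 (hc i hi)) (sq_nonneg _)

lemma le_re_inner_toEuclideanLin {s : Finset n} {c : ℝ} (hc : ∀ i ∈ s, c ≤ hA.eigenvalues i)
    {v : EuclideanSpace 𝕜 n} (hv : v ∈ hA.eigenvectorSpan s) :
    c * ‖v‖ ^ 2 ≤ RCLike.re ⟪v, toEuclideanLin A v⟫_𝕜 := by
  rw [← sub_nonneg, hA.re_inner_toEuclideanLin_sub_mul_norm_sq_of_mem hv]
  exact sum_nonneg fun i hi => mul_nonneg (sub_nonneg.2 (hc i hi)) (sq_nonneg _)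

lemma lt_re_inner_toEuclideanLin {s : Finset n} {c : ℝ} (hc : ∀ i ∈ s, c < hA.eigenvalues i)
    {v : EuclideanSpace 𝕜 n} (hv : v ∈ hA.eigenvectorSpan s) (hv0 : v ≠ 0) :
    c * ‖v‖ ^ 2 < RCLike.re ⟪v, toEuclideanLin A v⟫_𝕜 := by
  obtain ⟨j, hj⟩ : ∃ j, hA.eigenvectorBasis.repr v j ≠ 0 := by
    by_contra! h
    exact hv0 (hA.eigenvectorBasis.repr.map_eq_zero_iff.1 (PiLp.ext h))
  have hjs : j ∈ s := by_contra fun hjs => hj (hA.repr_eq_zero_of_mem_eigenvectorSpan hv hjs)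
  rw [← sub_pos, hA.re_inner_toEuclideanLin_sub_mul_norm_sq_of_mem hv]
  refine sum_pos' (fun i hi => mul_nonneg (sub_nonneg.2 (hc i hi).le) (sq_nonneg _))
    ⟨j, hjs, mul_pos (sub_pos.2 (hc j hjs)) (by positivity)⟩

lemma sum_eigenvalues_sq_eq_sum_norm_sq : ∑ i, hA.eigenvalues i ^ 2 = ∑ i, ∑ j, ‖A i j‖ ^ 2 := by
  have hspec : (A * A).trace = ∑ i, (hA.eigenvalues i : 𝕜) ^ 2 := by
    conv_lhs => rw [hA.spectral_theorem, ← map_mul, Unitary.conjStarAlgAut_apply, trace_mul_cycle,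
      Unitary.coe_star_mul_self, one_mul, diagonal_mul_diagonal, trace_diagonal]
    simp [sq]
  have hentries : (A * A).trace = ∑ i, ∑ j, ((‖A i j‖ ^ 2 : ℝ) : 𝕜) := by
    nth_rewrite 1 [← hA.eq]
    rw [trace, sum_comm]
    refine sum_congr rfl fun i _ => sum_congr rfl fun j _ => ?_
    simp [RCLike.conj_mul]
  exact_mod_cast hspec.symm.trans hentries

lemma card_eigenvalues_le_neg_mul_sq_le_sum_norm_sq {δ : ℝ} (hδ : 0 ≤ δ) :
    (#{i | hA.eigenvalues i ≤ -δ} : ℝ) * δ ^ 2 ≤ ∑ i, ∑ j, ‖A i j‖ ^ 2 := by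
  rw [← hA.sum_eigenvalues_sq_eq_sum_norm_sq]
  calc (#{i | hA.eigenvalues i ≤ -δ} : ℝ) * δ ^ 2
      = ∑ i with hA.eigenvalues i ≤ -δ, δ ^ 2 := by rw [sum_const, nsmul_eq_mul]
    _ ≤ ∑ i with hA.eigenvalues i ≤ -δ, hA.eigenvalues i ^ 2 :=
      sum_le_sum fun i hi => by nlinarith [(mem_filter.1 hi).2]
    _ ≤ ∑ i, hA.eigenvalues i ^ 2 :=
      sum_le_sum_of_subset_of_nonneg (filter_subset _ _) fun i _ _ => sq_nonneg _

theorem card_eigenvalues_lt_le_add {X Y C : Matrix n n 𝕜} (hX : X.IsHermitian)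
    (hY : Y.IsHermitian) (hC : C.IsHermitian) (hXYC : X = Y + C) (l δ : ℝ) :
    #{i | hX.eigenvalues i < l} ≤
      #{i | hY.eigenvalues i < l + δ} + #{i | hC.eigenvalues i ≤ -δ} := by
  set V := hX.eigenvectorSpan {i | hX.eigenvalues i < l}
  set W := hY.eigenvectorSpan {i | ¬hY.eigenvalues i < l + δ}
  set U := hC.eigenvectorSpan {i | ¬hC.eigenvalues i ≤ -δ}
  have hdisj : Disjoint V (W ⊓ U) := by
    rw [Submodule.disjoint_def]
    rintro v hV ⟨hW, hU⟩
    by_contra hv0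
    have hXv := hX.re_inner_toEuclideanLin_le (fun i hi => (mem_filter.1 hi).2.le) hV
    have hYv := hY.le_re_inner_toEuclideanLin (fun i hi => not_lt.1 (mem_filter.1 hi).2) hW
    have hCv := hC.lt_re_inner_toEuclideanLin (fun i hi => not_le.1 (mem_filter.1 hi).2) hU hv0
    have hsum : RCLike.re ⟪v, toEuclideanLin X v⟫_𝕜 =
        RCLike.re ⟪v, toEuclideanLin Y v⟫_𝕜 + RCLike.re ⟪v, toEuclideanLin C v⟫_𝕜 := by
      rw [hXYC, map_add, LinearMap.add_apply, inner_add_right, map_add]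
    linarith
  have hVWU := Submodule.finrank_add_finrank_le_of_disjoint hdisj
  have hWU := Submodule.finrank_sup_add_finrank_inf_eq W U
  have hsup := Submodule.finrank_le (W ⊔ U)
  have hYc := card_filter_add_card_filter_not (s := univ) (fun i => hY.eigenvalues i < l + δ)
  have hCc := card_filter_add_card_filter_not (s := univ) (fun i => hC.eigenvalues i ≤ -δ)
  simp only [V, W, U, finrank_eigenvectorSpan, finrank_euclideanSpace, card_univ] at *
  omega

theorem card_eigenvalues_lt_le_add_div {X Y C : Matrix n n 𝕜} (hX : X.IsHermitian)
    (hY : Y.IsHermitian) (hC : C.IsHermitian) (hXYC : X = Y + C) (l : ℝ) {δ : ℝ} (hδ : 0 < δ) :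
    (#{i | hX.eigenvalues i < l} : ℝ) ≤
      #{i | hY.eigenvalues i < l + δ} + (∑ i, ∑ j, ‖C i j‖ ^ 2) / δ ^ 2 := by
  have hcount : (#{i | hX.eigenvalues i < l} : ℝ) ≤
      #{i | hY.eigenvalues i < l + δ} + #{i | hC.eigenvalues i ≤ -δ} := by
    exact_mod_cast card_eigenvalues_lt_le_add hX hY hC hXYC l δ
  have hcheb := hC.card_eigenvalues_le_neg_mul_sq_le_sum_norm_sq hδ.le
  rw [← le_div_iff₀ (by positivity)] at hcheb
  linarith

end Matrix.IsHermitian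

theorem stmt8_general (N : ℕ) (hN : 0 < N) (A B : Matrix (Fin N) (Fin N) ℂ)
    (l ε t : ℝ) (hε : 0 < ε) (ht : 0 < t)
    (hABt : (((t : ℂ)⁻¹) • (A + B)).IsHermitian)
    (hAt : (((t : ℂ)⁻¹) • A).IsHermitian) :
    ((univ.filter (fun i => hABt.eigenvalues i < l)).card : ℝ) / N ≤
      ((univ.filter (fun i => hAt.eigenvalues i < l + ε * Real.sqrt N / t)).card : ℝ) / N +
        (∑ i, ∑ j, ‖B i j‖ ^ 2) / (ε ^ 2 * N ^ 2) := by
  set F := ∑ i, ∑ j, ‖B i j‖ ^ 2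
  have hsplit : (t : ℂ)⁻¹ • (A + B) = (t : ℂ)⁻¹ • A + (t : ℂ)⁻¹ • B := smul_add _ _ _
  have hC : ((t : ℂ)⁻¹ • B).IsHermitian := by
    simpa only [hsplit, add_sub_cancel_left] using hABt.sub hAt
  have hCF : ∑ i, ∑ j, ‖((t : ℂ)⁻¹ • B) i j‖ ^ 2 = F / t ^ 2 := by
    simp only [Matrix.smul_apply, norm_smul, norm_inv, Complex.norm_real,
      Real.norm_of_nonneg ht.le, mul_pow, ← mul_sum, F]
    rw [inv_pow, inv_mul_eq_div]
  have hδ : 0 < ε * √N / t := by have := Real.sqrt_pos.2 (Nat.cast_pos.2 hN); positivity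
  have hFδ : F / t ^ 2 / (ε * √N / t) ^ 2 = F / (ε ^ 2 * N) := by
    rw [div_pow, mul_pow, Real.sq_sqrt N.cast_nonneg, div_div_div_cancel_right₀ (by positivity)]
  have hcount := IsHermitian.card_eigenvalues_lt_le_add_div hABt hAt hC hsplit l hδ
  rw [hCF, hFδ] at hcount
  calc _ ≤ (#{i | hAt.eigenvalues i < l + ε * √N / t} + F / (ε ^ 2 * N)) / N := by gcongr
    _ = _ := by rw [add_div, div_div, mul_assoc, ← sq]

/-- For `N × N` Hermitian matrices `A`, `B`, any `l : ℝ`, `ε > 0`, `t > 0`: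
`μ_{(A+B)/t}(−∞, l) ≤ μ_{A/t}(−∞, l + ε√N/t) + ‖B‖_F²/(ε²N²)`, where `μ_M` is the
empirical spectral measure. -/
theorem stmt8 (N : ℕ) (hN : 0 < N) (A B : Matrix (Fin N) (Fin N) ℂ)
    (hA : A.IsHermitian) (hB : B.IsHermitian) (l ε t : ℝ) (hε : 0 < ε) (ht : 0 < t)
    (hABt : (((t : ℂ)⁻¹) • (A + B)).IsHermitian)
    (hAt : (((t : ℂ)⁻¹) • A).IsHermitian) :
    ((univ.filter (fun i => hABt.eigenvalues i < l)).card : ℝ) / N ≤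
      ((univ.filter (fun i => hAt.eigenvalues i < l + ε * Real.sqrt N / t)).card : ℝ) / N +
        (∑ i, ∑ j, ‖B i j‖ ^ 2) / (ε ^ 2 * N ^ 2) :=
  stmt8_general N hN A B l ε t hε ht hABt hAt
end

section
/- Let w₁, w₂ be closed words of length k+1 on (d-1)-cells such that N_{w₁}(τ) + N_{w₂}(τ) ≠ 1 for all d-cells τ and supp₁(w₁) ∩ supp₁(w₂) ≠ ∅ (they share a 1-cell). Then |supp₀(w₁ , w₂)| ≤ k + 2d − 2, where supp₀(w₁,w₂) is the union of the vertex supports of w₁ and w₂. -/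
/-!
Let `S₁, S₂` be the sets of distinct `d`-cells visited by the two words. Every cell of `S₁ ∪ S₂`
is visited at least twice in total, so `|S₁ ∪ S₂| ≤ k`. Walking along a word, consecutive cells
share a `(d-1)`-cell, so a cell not met before adds at most one new vertex: `w₁` covers at most
`(d + 1) + (|S₁| - 1)` vertices. Then walk around the closed word `w₂` starting from a cell `τ₀`
containing the shared `1`-cell: `τ₀` adds at most `d - 1` vertices if it is new (none otherwise),
and each later cell outside `S₁ ∪ {τ₀}` adds at most one more.
-/

open Finset

variable {α : Type*} [DecidableEq α]

abbrev cell (σ : ℕ → Finset α) (i : ℕ) : Finset α := σ i ∪ σ (i + 1)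

theorem card_image_union_image_le {ι β : Type*} [DecidableEq β] (s : Finset ι) (f g : ι → β)
    (h : ∀ b, #{i ∈ s | f i = b} + #{i ∈ s | g i = b} ≠ 1) :
    #(s.image f ∪ s.image g) ≤ #s := by
  set T := s.image f ∪ s.image g
  have hfib_f := card_eq_sum_card_fiberwise (t := T) (f := f) (s := s)
    fun i hi => mem_union_left _ (mem_image_of_mem f hi)
  have hfib_g := card_eq_sum_card_fiberwise (t := T) (f := g) (s := s)
    fun i hi => mem_union_right _ (mem_image_of_mem g hi)
  have htwice : ∀ b ∈ T, 2 ≤ #{i ∈ s | f i = b} + #{i ∈ s | g i = b} := by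
    intro b hb
    have hpos : 0 < #{i ∈ s | f i = b} + #{i ∈ s | g i = b} := by
      rcases mem_union.mp hb with hb | hb <;> obtain ⟨i, hi, hib⟩ := mem_image.mp hb
      · exact Nat.add_pos_left (card_pos.mpr ⟨i, mem_filter.mpr ⟨hi, hib⟩⟩) _
      · exact Nat.add_pos_right _ (card_pos.mpr ⟨i, mem_filter.mpr ⟨hi, hib⟩⟩)
    exact lt_of_le_of_ne hpos (h b).symm
  have := card_nsmul_le_sum T _ 2 htwice
  rw [sum_add_distrib, ← hfib_f, ← hfib_g, smul_eq_mul] at this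
  omega

theorem card_sdiff_le_of_subset_of_subset {s X Y : Finset α} (hX : s ⊆ X) (hY : s ⊆ Y) :
    #(X \ Y) ≤ #X - #s :=
  (card_le_card (sdiff_subset_sdiff le_rfl hY)).trans_eq (card_sdiff_of_subset hX)

/-- Along the chain, only a cell met for the first time and not inside `A ∪ c 0` can add a
vertex, and it adds at most one. -/
theorem card_union_biUnion_range_le (A : Finset α) (c : ℕ → Finset α) {n : ℕ} (hn : 0 < n)
    (hstep : ∀ j, j + 1 < n → #(c (j + 1) \ c j) ≤ 1) :
    #(A ∪ (range n).biUnion c) ≤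
      #(A ∪ c 0) + #{τ ∈ (range n).image c | ¬ τ ⊆ A ∪ c 0} := by
  induction n, hn using Nat.le_induction with
  | base => simp
  | succ n hn ih =>
    set U := A ∪ (range n).biUnion c
    have hsucc : A ∪ (range (n + 1)).biUnion c = U ∪ c n := by
      rw [range_add_one, biUnion_insert, union_left_comm, union_comm (c n)]
    have hprefix : ∀ j < n, c j ⊆ U := fun j hj =>
      subset_union_right.trans' (subset_biUnion_of_mem c (mem_range.mpr hj))
    have ih := ih fun j hj => hstep j (by omega)
    rw [hsucc, range_add_one, image_insert, filter_insert]
    by_cases hnew : c n ⊆ U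
    · rw [union_eq_left.mpr hnew]
      refine ih.trans (Nat.add_le_add_left (card_le_card fun τ hτ => ?_) _)
      split_ifs <;> simp_all
    · have hbase : A ∪ c 0 ⊆ U := union_subset subset_union_left (hprefix 0 hn)
      have hfresh : c n ∉ (range n).image c := fun h => by
        obtain ⟨j, hj, hcj⟩ := mem_image.mp h
        exact hnew (hcj ▸ hprefix j (mem_range.mp hj))
      have hone : #(c n \ U) ≤ 1 := by
        have := hstep (n - 1) (by omega)
        rw [Nat.sub_add_cancel hn] at this
        exact (card_le_card (sdiff_subset_sdiff le_rfl (hprefix (n - 1) (by omega)))).trans this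
      have hgrow : #(U ∪ c n) ≤ #U + 1 := by
        rw [union_comm, ← card_sdiff_add_card]
        omega
      rw [if_pos fun h => hnew (h.trans hbase),
        card_insert_of_notMem fun h => hfresh (mem_filter.mp h).1]
      omega

theorem biUnion_range_succ_subset_biUnion_cell (σ : ℕ → Finset α) {k : ℕ} (hk : 0 < k) :
    (range (k + 1)).biUnion σ ⊆ (range k).biUnion (cell σ) := by
  intro x hx
  obtain ⟨i, hi, hxi⟩ := mem_biUnion.mp hx
  rw [mem_range] at hi
  rw [mem_biUnion]
  rcases Nat.lt_or_ge i k with hik | hik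
  · exact ⟨i, mem_range.mpr hik, mem_union_left _ hxi⟩
  · refine ⟨k - 1, mem_range.mpr (by omega), mem_union_right _ ?_⟩
    rwa [Nat.sub_add_cancel hk, show k = i by omega]

theorem image_range_add_mod (j₀ k : ℕ) : (range k).image (fun j => (j₀ + j) % k) = range k := by
  calc (range k).image (fun j => (j₀ + j) % k) = ((range k).image (j₀ + ·)).image (· % k) := by
        rw [image_image]; rfl
    _ = range k := by
        rw [range_eq_Ico, image_add_left_Ico, add_zero, Nat.image_Ico_mod, range_eq_Ico]

section Word

variable {σ : ℕ → Finset α} {d k : ℕ}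

theorem card_biUnion_cell_le (hk : 0 < k) (hcard : ∀ i ≤ k, #(σ i) = d)
    (hcell : ∀ i < k, #(cell σ i) = d + 1) :
    #((range k).biUnion (cell σ)) ≤ d + #((range k).image (cell σ)) := by
  have hstep : ∀ j, j + 1 < k → #(cell σ (j + 1) \ cell σ j) ≤ 1 := fun j hj => by
    have := card_sdiff_le_of_subset_of_subset (s := σ (j + 1)) (X := cell σ (j + 1))
      (Y := cell σ j) subset_union_left subset_union_right
    rwa [hcell (j + 1) hj, hcard (j + 1) (by omega), Nat.add_sub_cancel_left] at this
  have hchain := card_union_biUnion_range_le ∅ (cell σ) hk hstep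
  rw [empty_union, empty_union, hcell 0 hk] at hchain
  have hfirst : cell σ 0 ∈ (range k).image (cell σ) := mem_image_of_mem _ (mem_range.mpr hk)
  have hrest : #{τ ∈ (range k).image (cell σ) | ¬ τ ⊆ cell σ 0} + 1 ≤
      #((range k).image (cell σ)) := by
    rw [← card_erase_add_one hfirst]
    gcongr
    intro τ hτ
    rw [mem_filter] at hτ
    exact mem_erase.mpr ⟨fun h => hτ.2 (h ▸ subset_rfl), hτ.1⟩
  omega

/-- In a closed word the step from the last cell back to the first also keeps a `(d-1)`-cell. -/
theorem card_cell_succ_mod_sdiff_le_one (hcard : ∀ i ≤ k, #(σ i) = d)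
    (hcell : ∀ i < k, #(cell σ i) = d + 1) (hclosed : σ k = σ 0) {i : ℕ} (hi : i < k) :
    #(cell σ ((i + 1) % k) \ cell σ i) ≤ 1 := by
  have hshared : σ ((i + 1) % k) ⊆ cell σ i := by
    rcases Nat.lt_or_ge (i + 1) k with h | h
    · rw [Nat.mod_eq_of_lt h]
      exact subset_union_right
    · have hik : i + 1 = k := by omega
      rw [hik, Nat.mod_self, ← hclosed, ← hik]
      exact subset_union_right
  have hlt : (i + 1) % k < k := Nat.mod_lt _ (by omega)
  have := card_sdiff_le_of_subset_of_subset (X := cell σ ((i + 1) % k)) subset_union_left hshared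
  rwa [hcell _ hlt, hcard _ hlt.le, Nat.add_sub_cancel_left] at this

theorem card_union_biUnion_cell_le_of_closed (A : Finset α) (hcard : ∀ i ≤ k, #(σ i) = d)
    (hcell : ∀ i < k, #(cell σ i) = d + 1) (hclosed : σ k = σ 0) {j₀ : ℕ} (hj₀ : j₀ < k) :
    #(A ∪ (range k).biUnion (cell σ)) ≤
      #(A ∪ cell σ j₀) + #{τ ∈ (range k).image (cell σ) | ¬ τ ⊆ A ∪ cell σ j₀} := by
  have hk : 0 < k := Nat.zero_lt_of_lt hj₀
  set c : ℕ → Finset α := fun j => cell σ ((j₀ + j) % k)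
  have hstep : ∀ j, j + 1 < k → #(c (j + 1) \ c j) ≤ 1 := fun j _ => by
    have := card_cell_succ_mod_sdiff_le_one hcard hcell hclosed (Nat.mod_lt (j₀ + j) hk)
    rw [Nat.mod_add_mod] at this
    simpa only [c, ← add_assoc] using this
  have hc0 : c 0 = cell σ j₀ := by simp only [c, add_zero, Nat.mod_eq_of_lt hj₀]
  have himage : (range k).image c = (range k).image (cell σ) := by
    conv_rhs => rw [← image_range_add_mod j₀ k, image_image]
    rfl
  have hbiUnion : (range k).biUnion c = (range k).biUnion (cell σ) := by
    conv_rhs => rw [← image_range_add_mod j₀ k, image_biUnion]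
  have := card_union_biUnion_range_le A c hk hstep
  rwa [hc0, himage, hbiUnion] at this

end Word

/-- Accounting for the first cell `τ₀` of the second walk, which meets the vertices `A` of the
first word in at least `p`: it costs at most `#τ₀ - #p` new vertices, and only if it is new. -/
theorem card_union_add_card_filter_le {A p τ₀ : Finset α} {S₁ S₂ : Finset (Finset α)}
    (hS₁ : ∀ τ ∈ S₁, τ ⊆ A) (hτ₀ : τ₀ ∈ S₂) (hpA : p ⊆ A) (hpτ₀ : p ⊆ τ₀) (hp : #p < #τ₀) :
    #(A ∪ τ₀) + #{τ ∈ S₂ | ¬ τ ⊆ A ∪ τ₀} + #S₁ + #p + 1 ≤ #A + #τ₀ + #(S₁ ∪ S₂) := by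
  have hold : insert τ₀ S₁ ⊆ S₁ ∪ S₂ := insert_subset (mem_union_right _ hτ₀) subset_union_left
  have hnew : {τ ∈ S₂ | ¬ τ ⊆ A ∪ τ₀} ⊆ (S₁ ∪ S₂) \ insert τ₀ S₁ := fun τ hτ => by
    simp only [mem_filter] at hτ
    simp only [mem_sdiff, mem_union, mem_insert, hτ.1, or_true, true_and]
    rintro (rfl | hτ₁)
    exacts [hτ.2 subset_union_right, hτ.2 ((hS₁ τ hτ₁).trans subset_union_left)]
  have hnew_card := (card_le_card hnew).trans_eq (card_sdiff_of_subset hold)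
  have hold_card := card_le_card hold
  by_cases hτ₀S₁ : τ₀ ∈ S₁
  · rw [union_eq_left.mpr (hS₁ τ₀ hτ₀S₁)] at hnew_card ⊢
    rw [insert_eq_of_mem hτ₀S₁] at hnew_card hold_card
    omega
  · have hinter : #p ≤ #(A ∩ τ₀) := card_le_card (subset_inter hpA hpτ₀)
    have := card_union_add_card_inter A τ₀
    rw [card_insert_of_notMem hτ₀S₁] at hnew_card hold_card
    omega

theorem stmt12_general (d k : ℕ) (hd : 2 ≤ d)
    (σ₁ σ₂ : ℕ → Finset ℕ)
    (hcard₁ : ∀ i ≤ k, (σ₁ i).card = d) (hcard₂ : ∀ i ≤ k, (σ₂ i).card = d)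
    (hcell₁ : ∀ i < k, (σ₁ i ∪ σ₁ (i + 1)).card = d + 1)
    (hcell₂ : ∀ i < k, (σ₂ i ∪ σ₂ (i + 1)).card = d + 1)
    (hclosed₂ : σ₂ k = σ₂ 0)
    (hN : ∀ τ : Finset ℕ,
      ((Finset.range k).filter (fun i => σ₁ i ∪ σ₁ (i + 1) = τ)).card +
        ((Finset.range k).filter (fun i => σ₂ i ∪ σ₂ (i + 1) = τ)).card ≠ 1)
    (hshare :
      (((Finset.range k).biUnion (fun i => (σ₁ i ∪ σ₁ (i + 1)).powersetCard 2)) ∩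
        ((Finset.range k).biUnion (fun i => (σ₂ i ∪ σ₂ (i + 1)).powersetCard 2))).Nonempty) :
    ((Finset.range (k + 1)).biUnion σ₁ ∪ (Finset.range (k + 1)).biUnion σ₂).card ≤
      k + 2 * d - 2 := by
  obtain ⟨p, hp⟩ := hshare
  simp only [mem_inter, mem_biUnion, mem_range, mem_powersetCard] at hp
  obtain ⟨⟨i₀, hi₀, hp₁, hp_card⟩, j₀, hj₀, hp₂, -⟩ := hp
  have hk : 0 < k := by omega
  set A := (range k).biUnion (cell σ₁)
  have hS : #((range k).image (cell σ₁) ∪ (range k).image (cell σ₂)) ≤ k :=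
    (card_image_union_image_le _ _ _ hN).trans_eq (card_range k)
  have hA : #A ≤ d + #((range k).image (cell σ₁)) := card_biUnion_cell_le hk hcard₁ hcell₁
  have hwalk := card_union_biUnion_cell_le_of_closed A hcard₂ hcell₂ hclosed₂ hj₀
  have hstart := card_union_add_card_filter_le (A := A) (p := p) (τ₀ := cell σ₂ j₀)
    (S₁ := (range k).image (cell σ₁))
    (fun τ hτ => by obtain ⟨i, hi, rfl⟩ := mem_image.mp hτ; exact subset_biUnion_of_mem _ hi)
    (mem_image_of_mem _ (mem_range.mpr hj₀))
    (hp₁.trans (subset_biUnion_of_mem (cell σ₁) (mem_range.mpr hi₀))) hp₂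
    (by rw [hp_card, hcell₂ j₀ hj₀]; omega)
  rw [hp_card, hcell₂ j₀ hj₀] at hstart
  calc _ ≤ #(A ∪ (range k).biUnion (cell σ₂)) :=
        card_le_card (union_subset_union (biUnion_range_succ_subset_biUnion_cell σ₁ hk)
          (biUnion_range_succ_subset_biUnion_cell σ₂ hk))
    _ ≤ k + 2 * d - 2 := by omega

/-- If `w₁, w₂` are closed words of length `k+1` on `(d-1)`-cells such
that `N_{w₁}(τ) + N_{w₂}(τ) ≠ 1` for every `d`-cell `τ` and `w₁, w₂` share a `1`-cell,
then `|supp₀(w₁, w₂)| ≤ k + 2d − 2`. -/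
theorem stmt12 (d k : ℕ) (hd : 2 ≤ d) (hk : 2 ≤ k)
    (σ₁ σ₂ : ℕ → Finset ℕ)
    (hcard₁ : ∀ i ≤ k, (σ₁ i).card = d) (hcard₂ : ∀ i ≤ k, (σ₂ i).card = d)
    (hcell₁ : ∀ i < k, (σ₁ i ∪ σ₁ (i + 1)).card = d + 1)
    (hcell₂ : ∀ i < k, (σ₂ i ∪ σ₂ (i + 1)).card = d + 1)
    (hclosed₁ : σ₁ k = σ₁ 0) (hclosed₂ : σ₂ k = σ₂ 0)
    (hN : ∀ τ : Finset ℕ,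
      ((Finset.range k).filter (fun i => σ₁ i ∪ σ₁ (i + 1) = τ)).card +
        ((Finset.range k).filter (fun i => σ₂ i ∪ σ₂ (i + 1) = τ)).card ≠ 1)
    (hshare :
      (((Finset.range k).biUnion (fun i => (σ₁ i ∪ σ₁ (i + 1)).powersetCard 2)) ∩
        ((Finset.range k).biUnion (fun i => (σ₂ i ∪ σ₂ (i + 1)).powersetCard 2))).Nonempty) :
    ((Finset.range (k + 1)).biUnion σ₁ ∪ (Finset.range (k + 1)).biUnion σ₂).card ≤
      k + 2 * d - 2 :=
  stmt12_general d k hd σ₁ σ₂ hcard₁ hcard₂ hcell₁ hcell₂ hclosed₂ hN hshare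
end

section
/- Let w₁, w₂ be closed words of length k+1 with |supp₀(w₁, w₂)| = s, such that every d-cell traversed by w₁ or w₂ is traversed at least twice in total (N_{w₁}(τ) + N_{w₂}(τ) ≥ 2 whenever positive). Let {χ_τ} be i.i.d. centered Bernoulli(p) random variables (χ_τ = Z_τ − p with Z_τ ~ Ber(p)) indexed by d-cells. Then |∏_τ E[χ_τ^{N_{w₁}(τ)+N_{w₂}(τ)}]| ≤ (p(1−p))^{s − 2d}. -/
/-!
Each factor is a centered Bernoulli moment of order at least two, hence has absolute value at
most `p(1-p)`, so the product is at most `(p(1-p))^c` with `c` the number of distinct cells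
traversed. Walking along a word, a step through an already visited cell adds no vertex and a step
through a new cell adds at most one, since consecutive faces differ in a single vertex. Running
through `w₁` and then `w₂` therefore gives `s ≤ c + 2d`, the `2d` accounting for the two starting
faces.
-/

open MeasureTheory

noncomputable def bernoulliMeasure (p : ℝ) : Measure ℝ :=
  ENNReal.ofReal p • Measure.dirac 1 + ENNReal.ofReal (1 - p) • Measure.dirac 0

open Finset

section WordSupport

variable (σ : ℕ → Finset ℕ)

def vertexSupport (k : ℕ) : Finset ℕ := (range (k + 1)).biUnion σ

def cellSupport (k : ℕ) : Finset (Finset ℕ) := (range k).image fun i => σ i ∪ σ (i + 1)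

def traversalCount (k : ℕ) (τ : Finset ℕ) : ℕ := #{i ∈ range k | σ i ∪ σ (i + 1) = τ}

lemma vertexSupport_zero : vertexSupport σ 0 = σ 0 := by
  simp [vertexSupport]

lemma vertexSupport_succ (k : ℕ) : vertexSupport σ (k + 1) = vertexSupport σ k ∪ σ (k + 1) := by
  rw [vertexSupport, range_add_one, biUnion_insert, union_comm, vertexSupport]

lemma cellSupport_zero : cellSupport σ 0 = ∅ := by
  simp [cellSupport]

lemma cellSupport_succ (k : ℕ) :
    cellSupport σ (k + 1) = insert (σ k ∪ σ (k + 1)) (cellSupport σ k) := by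
  rw [cellSupport, range_add_one, image_insert, cellSupport]

variable {σ}

lemma subset_vertexSupport {i k : ℕ} (h : i ≤ k) : σ i ⊆ vertexSupport σ k :=
  subset_biUnion_of_mem σ (mem_range.2 (Nat.lt_succ_of_le h))

lemma subset_vertexSupport_of_mem_cellSupport {τ : Finset ℕ} {k : ℕ}
    (h : τ ∈ cellSupport σ k) : τ ⊆ vertexSupport σ k := by
  obtain ⟨i, hi, rfl⟩ := mem_image.1 h
  have hi : i < k := mem_range.1 hi
  exact union_subset (subset_vertexSupport hi.le) (subset_vertexSupport hi)

lemma traversalCount_pos_of_mem_cellSupport {τ : Finset ℕ} {k : ℕ} (h : τ ∈ cellSupport σ k) :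
    0 < traversalCount σ k τ := by
  obtain ⟨i, hi, rfl⟩ := mem_image.1 h
  exact card_pos.2 ⟨i, mem_filter.2 ⟨hi, rfl⟩⟩

lemma card_union_vertexSupport_le {k : ℕ} (hstep : ∀ i < k, #(σ (i + 1) \ σ i) ≤ 1)
    (V : Finset ℕ) (C : Finset (Finset ℕ)) (hC : ∀ τ ∈ C, τ ⊆ V) :
    #(V ∪ vertexSupport σ k) ≤ #(V ∪ σ 0) + #(cellSupport σ k \ C) := by
  induction k with
  | zero => simp [vertexSupport_zero, cellSupport_zero]
  | succ k ih =>
    specialize ih fun i hi => hstep i (by omega)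
    set A := V ∪ vertexSupport σ k
    rw [vertexSupport_succ, ← union_assoc, cellSupport_succ]
    by_cases hold : σ k ∪ σ (k + 1) ∈ C ∪ cellSupport σ k
    · have hsub : σ (k + 1) ⊆ A := by
        refine (subset_union_right (s₁ := σ k)).trans ?_
        rcases mem_union.1 hold with h | h
        · exact (hC _ h).trans subset_union_left
        · exact (subset_vertexSupport_of_mem_cellSupport h).trans subset_union_right
      rw [union_eq_left.2 hsub]
      exact ih.trans (by gcongr; exact subset_insert _ _)
    · obtain ⟨hC', hcells⟩ : _ ∉ C ∧ _ ∉ cellSupport σ k := by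
        simpa only [mem_union, not_or] using hold
      have hnew : #(σ (k + 1) \ A) ≤ 1 :=
        (card_le_card (sdiff_subset_sdiff le_rfl
          ((subset_vertexSupport le_rfl).trans subset_union_right))).trans (hstep k (by omega))
      have hsplit := card_sdiff_add_card (σ (k + 1)) A
      rw [insert_sdiff_of_notMem _ hC', card_insert_of_notMem (fun h => hcells (mem_sdiff.1 h).1),
        union_comm, ← hsplit]
      omega

lemma card_sdiff_le_one_of_card_union {d : ℕ} {s t : Finset ℕ} (hs : #s = d)
    (hst : #(s ∪ t) = d + 1) : #(t \ s) ≤ 1 := by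
  have := card_sdiff_add_card t s
  rw [union_comm] at hst
  omega

lemma card_vertexSupport_union_le {σ₁ σ₂ : ℕ → Finset ℕ} {k₁ k₂ : ℕ}
    (hstep₁ : ∀ i < k₁, #(σ₁ (i + 1) \ σ₁ i) ≤ 1) (hstep₂ : ∀ i < k₂, #(σ₂ (i + 1) \ σ₂ i) ≤ 1) :
    #(vertexSupport σ₁ k₁ ∪ vertexSupport σ₂ k₂) ≤
      #(σ₁ 0) + #(σ₂ 0) + #(cellSupport σ₁ k₁ ∪ cellSupport σ₂ k₂) := by
  have h₁ := card_union_vertexSupport_le hstep₁ ∅ ∅ (by simp)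
  have h₂ := card_union_vertexSupport_le hstep₂ (vertexSupport σ₁ k₁) (cellSupport σ₁ k₁)
    fun _ => subset_vertexSupport_of_mem_cellSupport
  have h₃ := card_union_le (vertexSupport σ₁ k₁) (σ₂ 0)
  have h₄ := card_sdiff_add_card (cellSupport σ₂ k₂) (cellSupport σ₁ k₁)
  simp only [empty_union, sdiff_empty] at h₁
  rw [union_comm (cellSupport σ₂ k₂)] at h₄
  omega

end WordSupport

section CenteredBernoulli

variable {p : ℝ}

lemma integral_bernoulliMeasure (hp0 : 0 ≤ p) (hp1 : p ≤ 1) (f : ℝ → ℝ) :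
    ∫ x, f x ∂bernoulliMeasure p = p * f 1 + (1 - p) * f 0 := by
  have hint : ∀ (a : ℝ) (c : ENNReal), c ≠ ⊤ → Integrable f (c • Measure.dirac a) :=
    fun a _ hc => (integrable_dirac enorm_lt_top).smul_measure hc
  rw [bernoulliMeasure, integral_add_measure (hint _ _ ENNReal.ofReal_ne_top)
    (hint _ _ ENNReal.ofReal_ne_top), integral_smul_measure, integral_smul_measure,
    integral_dirac, integral_dirac, ENNReal.toReal_ofReal hp0,
    ENNReal.toReal_ofReal (sub_nonneg.2 hp1), smul_eq_mul, smul_eq_mul]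

lemma abs_integral_sub_pow_le (hp0 : 0 ≤ p) (hp1 : p ≤ 1) {m : ℕ} (hm : 2 ≤ m) :
    |∫ x, (x - p) ^ m ∂bernoulliMeasure p| ≤ p * (1 - p) := by
  obtain ⟨n, rfl⟩ : ∃ n, m = n + 2 := ⟨m - 2, by omega⟩
  have hq : 0 ≤ 1 - p := sub_nonneg.2 hp1
  have hpow : (1 - p) ^ (n + 1) + p ^ (n + 1) ≤ 1 := by
    have h₁ : (1 - p) ^ (n + 1) ≤ 1 - p := pow_le_of_le_one hq (by linarith) n.succ_ne_zero
    have h₂ : p ^ (n + 1) ≤ p := pow_le_of_le_one hp0 hp1 n.succ_ne_zero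
    linarith
  rw [integral_bernoulliMeasure hp0 hp1]
  calc |p * (1 - p) ^ (n + 2) + (1 - p) * (0 - p) ^ (n + 2)|
      ≤ |p * (1 - p) ^ (n + 2)| + |(1 - p) * (0 - p) ^ (n + 2)| := abs_add_le _ _
    _ = p * (1 - p) * ((1 - p) ^ (n + 1) + p ^ (n + 1)) := by
      rw [abs_mul, abs_mul, abs_pow, abs_pow, zero_sub, abs_neg, abs_of_nonneg hp0,
        abs_of_nonneg hq]
      ring
    _ ≤ p * (1 - p) := mul_le_of_le_one_right (mul_nonneg hp0 hq) hpow

end CenteredBernoulli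

lemma abs_prod_le_pow_card {ι : Type*} {s : Finset ι} {f : ι → ℝ} {c : ℝ}
    (h : ∀ i ∈ s, |f i| ≤ c) : |∏ i ∈ s, f i| ≤ c ^ #s := by
  calc |∏ i ∈ s, f i| = ∏ i ∈ s, |f i| := abs_prod s f
    _ ≤ ∏ _i ∈ s, c := prod_le_prod (fun _ _ => abs_nonneg _) h
    _ = c ^ #s := prod_const c

theorem stmt13_general (d k s : ℕ) (p : ℝ)
    (hp0 : 0 ≤ p) (hp1 : p ≤ 1)
    (σ₁ σ₂ : ℕ → Finset ℕ)
    (hcard₁ : ∀ i ≤ k, (σ₁ i).card = d) (hcard₂ : ∀ i ≤ k, (σ₂ i).card = d)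
    (hcell₁ : ∀ i < k, (σ₁ i ∪ σ₁ (i + 1)).card = d + 1)
    (hcell₂ : ∀ i < k, (σ₂ i ∪ σ₂ (i + 1)).card = d + 1)
    (hsupp : ((Finset.range (k + 1)).biUnion σ₁ ∪ (Finset.range (k + 1)).biUnion σ₂).card = s)
    (hN : ∀ τ : Finset ℕ,
      ((Finset.range k).filter (fun i => σ₁ i ∪ σ₁ (i + 1) = τ)).card +
        ((Finset.range k).filter (fun i => σ₂ i ∪ σ₂ (i + 1) = τ)).card ≠ 1) :
    |∏ τ ∈ ((Finset.range k).image (fun i => σ₁ i ∪ σ₁ (i + 1)) ∪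
        (Finset.range k).image (fun i => σ₂ i ∪ σ₂ (i + 1))),
        ∫ x, (x - p) ^
          (((Finset.range k).filter (fun i => σ₁ i ∪ σ₁ (i + 1) = τ)).card +
            ((Finset.range k).filter (fun i => σ₂ i ∪ σ₂ (i + 1) = τ)).card)
          ∂(bernoulliMeasure p)| ≤
      (p * (1 - p)) ^ (s - 2 * d) := by
  have hvert := card_vertexSupport_union_le
    (fun i hi => card_sdiff_le_one_of_card_union (hcard₁ i hi.le) (hcell₁ i hi))
    (fun i hi => card_sdiff_le_one_of_card_union (hcard₂ i hi.le) (hcell₂ i hi))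
  rw [hcard₁ 0 k.zero_le, hcard₂ 0 k.zero_le] at hvert
  have hs : #(vertexSupport σ₁ k ∪ vertexSupport σ₂ k) = s := hsupp
  have hmoment : ∀ τ ∈ cellSupport σ₁ k ∪ cellSupport σ₂ k,
      |∫ x, (x - p) ^ (traversalCount σ₁ k τ + traversalCount σ₂ k τ) ∂bernoulliMeasure p| ≤
        p * (1 - p) := by
    intro τ hτ
    have hN' : traversalCount σ₁ k τ + traversalCount σ₂ k τ ≠ 1 := hN τ
    have hpos : 0 < traversalCount σ₁ k τ + traversalCount σ₂ k τ := by
      rcases mem_union.1 hτ with h | h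
      · exact Nat.add_pos_left (traversalCount_pos_of_mem_cellSupport h) _
      · exact Nat.add_pos_right _ (traversalCount_pos_of_mem_cellSupport h)
    exact abs_integral_sub_pow_le hp0 hp1 (by omega)
  exact (abs_prod_le_pow_card hmoment).trans
    (pow_le_pow_of_le_one (mul_nonneg hp0 (sub_nonneg.2 hp1)) (by nlinarith) (by omega))

/-- For closed words `w₁, w₂` of length `k+1` with
`|supp₀(w₁,w₂)| = s` and every traversed `d`-cell traversed at least twice in total,
and i.i.d. centered Bernoulli(p) variables `χ_τ`,
`|∏_τ E[χ_τ^{N_{w₁}(τ)+N_{w₂}(τ)}]| ≤ (p(1−p))^{s−2d}` (product over traversed `d`-cells). -/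
theorem stmt13 (d k s : ℕ) (hd : 2 ≤ d) (hk : 2 ≤ k) (p : ℝ)
    (hp0 : 0 ≤ p) (hp1 : p ≤ 1)
    (σ₁ σ₂ : ℕ → Finset ℕ)
    (hcard₁ : ∀ i ≤ k, (σ₁ i).card = d) (hcard₂ : ∀ i ≤ k, (σ₂ i).card = d)
    (hcell₁ : ∀ i < k, (σ₁ i ∪ σ₁ (i + 1)).card = d + 1)
    (hcell₂ : ∀ i < k, (σ₂ i ∪ σ₂ (i + 1)).card = d + 1)
    (hclosed₁ : σ₁ k = σ₁ 0) (hclosed₂ : σ₂ k = σ₂ 0)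
    (hsupp : ((Finset.range (k + 1)).biUnion σ₁ ∪ (Finset.range (k + 1)).biUnion σ₂).card = s)
    (hN : ∀ τ : Finset ℕ,
      ((Finset.range k).filter (fun i => σ₁ i ∪ σ₁ (i + 1) = τ)).card +
        ((Finset.range k).filter (fun i => σ₂ i ∪ σ₂ (i + 1) = τ)).card ≠ 1) :
    |∏ τ ∈ ((Finset.range k).image (fun i => σ₁ i ∪ σ₁ (i + 1)) ∪
        (Finset.range k).image (fun i => σ₂ i ∪ σ₂ (i + 1))),
        ∫ x, (x - p) ^
          (((Finset.range k).filter (fun i => σ₁ i ∪ σ₁ (i + 1) = τ)).card +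
            ((Finset.range k).filter (fun i => σ₂ i ∪ σ₂ (i + 1) = τ)).card)
          ∂(bernoulliMeasure p)| ≤
      (p * (1 - p)) ^ (s - 2 * d) :=
  stmt13_general d k s p hp0 hp1 σ₁ σ₂ hcard₁ hcard₂ hcell₁ hcell₂ hsupp hN
end

section
/- Let (ν_n) be a sequence of random probability measures on ℝ and ν a deterministic probability measure such that ν_n → ν weakly almost surely. Let (m_n) be random integers with 0 ≤ m_n ≤ N_n, N_n → ∞, and suppose m_n/N_n → c ∈ (0,1] almost surely, and that ν_n = (m_n/N_n)·ρ_n + (1 − m_n/N_n)·δ₀ where ρ_n are random probability measures. If ν = c·ρ + (1−c)·δ₀ for a probability measure ρ with ρ({0}) = 0 and with continuous distribution function on ℝ∖{0}, then ρ_n → ρ weakly almost surely. -/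
open MeasureTheory Filter

lemma integral_mix_aux (σ : ProbabilityMeasure ℝ) (t : ℝ) (ht0 : 0 ≤ t) (ht1 : t ≤ 1)
    (f : BoundedContinuousFunction ℝ ℝ) :
    ∫ x, f x ∂(ENNReal.ofReal t • (σ : Measure ℝ) + ENNReal.ofReal (1 - t) • Measure.dirac 0)
      = t * ∫ x, f x ∂(σ : Measure ℝ) + (1 - t) * f 0 := by
  have h1 : Integrable f (ENNReal.ofReal t • (σ : Measure ℝ)) :=
    (f.integrable _).smul_measure ENNReal.ofReal_ne_top
  have h2 : Integrable f (ENNReal.ofReal (1 - t) • (Measure.dirac (0:ℝ))) :=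
    (f.integrable _).smul_measure ENNReal.ofReal_ne_top
  rw [integral_add_measure h1 h2, integral_smul_measure, integral_smul_measure,
    integral_dirac, ENNReal.toReal_ofReal ht0, ENNReal.toReal_ofReal (by linarith)]
  simp [smul_eq_mul]

/-- If random probability measures `ν_n = (m_n/N_n)·ρ_n + (1−m_n/N_n)·δ₀`
converge weakly a.s. to `ν = c·ρ + (1−c)·δ₀` with `m_n/N_n → c ∈ (0,1]` a.s.,
`ρ({0}) = 0` and the cdf of `ρ` continuous off `0`, then `ρ_n → ρ` weakly a.s. -/
theorem stmt15 {Ω : Type*} [MeasurableSpace Ω] (P : Measure Ω) [IsProbabilityMeasure P]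
    (ν ρn : ℕ → Ω → ProbabilityMeasure ℝ)
    (m : ℕ → Ω → ℕ) (Nn : ℕ → ℕ) (c : ℝ) (hc0 : 0 < c) (hc1 : c ≤ 1)
    (ρ νlim : ProbabilityMeasure ℝ)
    (hNn : Tendsto Nn atTop atTop)
    (hmN : ∀ n ω, m n ω ≤ Nn n)
    (hmix : ∀ n ω, (ν n ω : Measure ℝ) =
      ENNReal.ofReal ((m n ω : ℝ) / (Nn n : ℝ)) • (ρn n ω : Measure ℝ) +
        ENNReal.ofReal (1 - (m n ω : ℝ) / (Nn n : ℝ)) • Measure.dirac 0)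
    (hconv : ∀ᵐ ω ∂P, Tendsto (fun n => ν n ω) atTop (nhds νlim))
    (hfrac : ∀ᵐ ω ∂P, Tendsto (fun n => (m n ω : ℝ) / (Nn n : ℝ)) atTop (nhds c))
    (hρ0 : (ρ : Measure ℝ) {0} = 0)
    (hρcont : ContinuousOn (fun x => ((ρ : Measure ℝ) (Set.Iic x)).toReal)
      {x : ℝ | x ≠ 0})
    (hνlim : (νlim : Measure ℝ) =
      ENNReal.ofReal c • (ρ : Measure ℝ) + ENNReal.ofReal (1 - c) • Measure.dirac 0) :
    ∀ᵐ ω ∂P, Tendsto (fun n => ρn n ω) atTop (nhds ρ) := by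
  filter_upwards [hconv, hfrac] with ω hω hωf
  rw [ProbabilityMeasure.tendsto_iff_forall_integral_tendsto]
  intro f
  set t : ℕ → ℝ := fun n => (m n ω : ℝ) / (Nn n : ℝ) with ht
  have ht0 : ∀ n, 0 ≤ t n := fun n => by positivity
  have ht1 : ∀ n, t n ≤ 1 := fun n => by
    rcases Nat.eq_zero_or_pos (Nn n) with h | h
    · simp [ht, h]
    · rw [ht]
      rw [div_le_one (by exact_mod_cast h)]
      exact_mod_cast hmN n ω
  have hIν : ∀ n, ∫ x, f x ∂(ν n ω : Measure ℝ)
      = t n * ∫ x, f x ∂(ρn n ω : Measure ℝ) + (1 - t n) * f 0 := fun n => by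
    rw [hmix n ω]; exact integral_mix_aux _ _ (ht0 n) (ht1 n) f
  have hIνl : ∫ x, f x ∂(νlim : Measure ℝ)
      = c * ∫ x, f x ∂(ρ : Measure ℝ) + (1 - c) * f 0 := by
    rw [hνlim]; exact integral_mix_aux _ _ hc0.le hc1 f
  have hν : Tendsto (fun n => ∫ x, f x ∂(ν n ω : Measure ℝ)) atTop
      (nhds (∫ x, f x ∂(νlim : Measure ℝ))) :=
    ProbabilityMeasure.tendsto_iff_forall_integral_tendsto.mp hω f
  have h1 : Tendsto (fun n => (1 - t n) * f 0) atTop (nhds ((1 - c) * f 0)) :=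
    (tendsto_const_nhds.sub hωf).mul tendsto_const_nhds
  have h2 : Tendsto (fun n => ((∫ x, f x ∂(ν n ω : Measure ℝ)) - (1 - t n) * f 0) / t n)
      atTop (nhds (((∫ x, f x ∂(νlim : Measure ℝ)) - (1 - c) * f 0) / c)) :=
    (hν.sub h1).div hωf hc0.ne'
  have hval : ((∫ x, f x ∂(νlim : Measure ℝ)) - (1 - c) * f 0) / c
      = ∫ x, f x ∂(ρ : Measure ℝ) := by
    rw [hIνl, add_sub_cancel_right, mul_div_cancel_left₀ _ hc0.ne']
  rw [hval] at h2
  refine h2.congr' ?_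
  have hev : ∀ᶠ n in atTop, 0 < t n := hωf.eventually (eventually_gt_nhds hc0)
  filter_upwards [hev] with n hn
  rw [hIν n, add_sub_cancel_right, mul_div_cancel_left₀ _ hn.ne']
end
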